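/- arXiv:2408.02851 — 12 statements merged into one kernel-verified Lean document; each statement's English description precedes it below -/
import Mathlib

section
/- Let A be the set of P-positions of an altered Wythoff game with alteration sets 𝒫, 𝒩 contained in the box [0, m_x−1] × [0, m_y−1], and let t ≥ m_x be a natural column. Then for all y with 0 ≤ y < ℓ_t, row_t[y] is TRUE (i.e., there exists x ≤ t with (x,y) ∈ A), and for all y > u_t, row_t[y] is FALSE (i.e., there is no x ≤ t with (x,y) ∈ A). -/
/-- A Wythoff move from `p` to `q`: remove stones from the first pile, from the
second pile, or the same positive number from both piles. -/
def WMove (p q : ℕ × ℕ) : Prop :=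
  (q.1 < p.1 ∧ q.2 = p.2) ∨ (q.1 = p.1 ∧ q.2 < p.2) ∨
    (∃ k : ℕ, 0 < k ∧ k ≤ p.1 ∧ k ≤ p.2 ∧ q.1 = p.1 - k ∧ q.2 = p.2 - k)

/-- `diag A t y` : the diagonal ending at `(t, y)` contains a P-position,
i.e. `(t - k, y - k) ∈ A` for some `k ≥ 0`. -/
def diag (A : Set (ℕ × ℕ)) (t y : ℕ) : Prop :=
  ∃ k : ℕ, k ≤ t ∧ k ≤ y ∧ (t - k, y - k) ∈ A

/-- `ℓ_t` : the minimum `y` such that `diag A t y` holds. -/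
noncomputable def ell (A : Set (ℕ × ℕ)) (t : ℕ) : ℕ := sInf {y | diag A t y}

/-- `u_t` : the maximum `y` such that `diag A t y` holds. -/
noncomputable def uu (A : Set (ℕ × ℕ)) (t : ℕ) : ℕ := sSup {y | diag A t y}

/-!
Below `ℓ_t`: if `(t, y)` is not itself a P-position then, since column `t` lies outside the
alteration box, some move from `(t, y)` reaches `A`. A vertical or diagonal move would put a
P-position on a diagonal through column `t` at height `≤ y < ℓ_t`, so the move is horizontal
and row `y` is filled. Above `u_t`: a P-position `(x, y)` with `x ≤ t` lies on the diagonal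
through `(t, y + (t - x))`, so `y ≤ u_t`; here `u_t` is a genuine maximum because every column
of `A` is bounded, two P-positions above the box in one column being joined by a vertical move.
-/

def IsAlteredWythoffPSet (P N A : Set (ℕ × ℕ)) : Prop :=
  ∀ p : ℕ × ℕ, p ∈ A ↔ (p ∈ P ∨ (p ∉ N ∧ ∀ q, WMove p q → q ∉ A))

section AlteredWythoff

variable {P N A : Set (ℕ × ℕ)}

theorem not_mem_of_wmove_mem (hA : IsAlteredWythoffPSet P N A)
    {p q : ℕ × ℕ} (hpP : p ∉ P) (hpq : WMove p q) (hq : q ∈ A) : p ∉ A := by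
  intro hp
  rcases (hA p).mp hp with hp' | ⟨-, hmoves⟩
  · exact hpP hp'
  · exact hmoves q hpq hq

theorem exists_wmove_mem_of_not_mem (hA : IsAlteredWythoffPSet P N A)
    {p : ℕ × ℕ} (hpN : p ∉ N) (hp : p ∉ A) : ∃ q, WMove p q ∧ q ∈ A := by
  by_contra! hno
  exact hp ((hA p).mpr (Or.inr ⟨hpN, hno⟩))

theorem bddAbove_column (hA : IsAlteredWythoffPSet P N A)
    {my : ℕ} (hP : ∀ p ∈ P, p.2 < my) (x : ℕ) : BddAbove {y | (x, y) ∈ A} := by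
  by_cases hhigh : ∃ y₀, my ≤ y₀ ∧ (x, y₀) ∈ A
  · obtain ⟨y₀, hmy, hy₀⟩ := hhigh
    refine ⟨y₀, fun y hy => ?_⟩
    by_contra! hlt
    have hyP : (x, y) ∉ P := fun h => by have := hP _ h; dsimp at this; omega
    exact not_mem_of_wmove_mem (q := (x, y₀)) hA hyP (Or.inr (Or.inl ⟨rfl, hlt⟩)) hy₀ hy
  · exact ⟨my, fun y hy => by by_contra! h; exact hhigh ⟨y, h.le, hy⟩⟩

theorem diag_of_mem {t x y : ℕ} (hx : x ≤ t) (hxy : (x, y) ∈ A) :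
    diag A t (y + (t - x)) :=
  ⟨t - x, by omega, by omega, by
    rwa [show t - (t - x) = x by omega, Nat.add_sub_cancel]⟩

theorem bddAbove_diag (hcol : ∀ x, BddAbove {y | (x, y) ∈ A}) (t : ℕ) :
    BddAbove {y | diag A t y} := by
  choose B hB using hcol
  refine ⟨(Finset.range (t + 1)).sup B + t, fun y ⟨k, hkt, hky, hmem⟩ => ?_⟩
  have hcolumn : y - k ≤ B (t - k) := hB (t - k) hmem
  have hsup : B (t - k) ≤ (Finset.range (t + 1)).sup B :=
    Finset.le_sup (Finset.mem_range.mpr (by omega))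
  omega

theorem exists_mem_row_of_lt_ell (hA : IsAlteredWythoffPSet P N A)
    {t y : ℕ} (htN : (t, y) ∉ N) (hy : y < ell A t) : ∃ x ≤ t, (x, y) ∈ A := by
  by_cases hty : (t, y) ∈ A
  · exact ⟨t, le_rfl, hty⟩
  obtain ⟨⟨a, b⟩, hmove, hab⟩ := exists_wmove_mem_of_not_mem hA htN hty
  rcases hmove with ⟨ha, hb⟩ | ⟨ha, hb⟩ | ⟨k, -, hkt, hky, ha, hb⟩ <;> dsimp only at ha hb
  · exact ⟨a, ha.le, hb ▸ hab⟩
  · have : ell A t ≤ b := Nat.sInf_le ⟨0, Nat.zero_le _, Nat.zero_le _, by simpa [ha] using hab⟩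
    omega
  · have : ell A t ≤ y := Nat.sInf_le ⟨k, hkt, hky, ha ▸ hb ▸ hab⟩
    omega

theorem not_exists_mem_row_of_uu_lt {t : ℕ} (hbdd : BddAbove {y | diag A t y}) {y : ℕ}
    (hy : uu A t < y) : ¬ ∃ x ≤ t, (x, y) ∈ A := by
  rintro ⟨x, hx, hxy⟩
  have : y + (t - x) ≤ uu A t := le_csSup hbdd (diag_of_mem hx hxy)
  omega

end AlteredWythoff

theorem row_fill_property_general (P N A : Set (ℕ × ℕ)) (mx my : ℕ)
    (hbox : P ∪ N ⊆ Set.Iio mx ×ˢ Set.Iio my)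
    (hA : ∀ p : ℕ × ℕ, p ∈ A ↔ (p ∈ P ∨ (p ∉ N ∧ ∀ q, WMove p q → q ∉ A)))
    (t : ℕ) (ht : mx ≤ t) :
    (∀ y, y < ell A t → ∃ x ≤ t, (x, y) ∈ A) ∧
    (∀ y, uu A t < y → ¬ ∃ x ≤ t, (x, y) ∈ A) := by
  have hP : ∀ p ∈ P, p.2 < my := fun p hp => (hbox (Or.inl hp)).2
  have htN : ∀ y, (t, y) ∉ N := fun y hy => by
    have : t < mx := (hbox (Or.inr hy)).1
    omega
  exact ⟨fun y => exists_mem_row_of_lt_ell hA (htN y),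
    fun y => not_exists_mem_row_of_uu_lt (bddAbove_diag (bddAbove_column hA hP) t)⟩

/-- Lemma 1 (row fill property): after a natural column `t` is computed,
`row_t[y]` is TRUE for all `y < ℓ_t` and FALSE for all `y > u_t`. -/
theorem row_fill_property (P N A : Set (ℕ × ℕ)) (mx my : ℕ)
    (hPfin : P.Finite) (hNfin : N.Finite) (hdisj : Disjoint P N)
    (hbox : P ∪ N ⊆ Set.Iio mx ×ˢ Set.Iio my)
    (hA : ∀ p : ℕ × ℕ, p ∈ A ↔ (p ∈ P ∨ (p ∉ N ∧ ∀ q, WMove p q → q ∉ A)))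
    (t : ℕ) (ht : mx ≤ t) :
    (∀ y, y < ell A t → ∃ x ≤ t, (x, y) ∈ A) ∧
    (∀ y, uu A t < y → ¬ ∃ x ≤ t, (x, y) ∈ A) :=
  row_fill_property_general P N A mx my hbox hA t ht
end

section
/- For any altered Wythoff game, there exists a natural column t such that column t and every column after it is saturated, i.e., for every t′ ≥ t, diag_{t′}[y] holds if and only if ℓ_{t′} ≤ y ≤ u_{t′}. -/
/-- Column `t` is saturated if `diag_t[y]` holds exactly when `ℓ_t ≤ y ≤ u_t`. -/
def Saturated (A : Set (ℕ × ℕ)) (t : ℕ) : Prop :=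
  ∀ y, diag A t y ↔ (ell A t ≤ y ∧ y ≤ uu A t)

theorem Nat.nth_le_nth_add_two_mul {p : ℕ → Prop} (hp : (Set.ofPred p).Infinite)
    (h : ∀ s, p s → p (s + 1) ∨ p (s + 2)) {j k : ℕ} (hjk : j ≤ k) :
    Nat.nth p k ≤ Nat.nth p j + 2 * (k - j) := by
  classical
  have step : ∀ k, Nat.nth p (k + 1) ≤ Nat.nth p k + 2 := by
    intro k
    obtain ⟨s, hs, hks, hsk⟩ : ∃ s, p s ∧ Nat.nth p k < s ∧ s ≤ Nat.nth p k + 2 := by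
      rcases h _ (Nat.nth_mem_of_infinite hp k) with h | h
      · exact ⟨_, h, by omega, by omega⟩
      · exact ⟨_, h, by omega, le_rfl⟩
    have hk : k < Nat.count p s := (Nat.lt_nth_iff_count_lt hp).2 hks
    calc Nat.nth p (k + 1) ≤ Nat.nth p (Nat.count p s) := (Nat.nth_le_nth hp).2 hk
      _ = s := Nat.nth_count hs
      _ ≤ Nat.nth p k + 2 := hsk
  induction k, hjk using Nat.le_induction with
  | base => simp
  | succ k hjk ih => have := step k; omega

theorem Nat.not_injOn_Ici_of_three_mul_lt {f : ℕ → ℕ} {K : ℕ} (hf : ∀ k ≥ K, 3 * f k < 2 * k) :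
    ¬ Set.InjOn f (Set.Ici K) := by
  intro hinj
  have hmaps : Set.MapsTo f (Finset.Icc K (3 * K)) (Finset.range (2 * K)) := by
    intro k hk
    have := hf k (Finset.mem_Icc.1 hk).1
    have := (Finset.mem_Icc.1 hk).2
    rw [Finset.coe_range, Set.mem_Iio]
    omega
  have := Finset.card_le_card_of_injOn f hmaps (hinj.mono fun k hk => (Finset.mem_Icc.1 hk).1)
  simp only [Nat.card_Icc, Finset.card_range] at this
  omega

namespace AlteredWythoff

def usedRows (A : Set (ℕ × ℕ)) (t : ℕ) : Set ℕ := {y | ∃ x < t, (x, y) ∈ A}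

def diagBefore (A : Set (ℕ × ℕ)) (t y : ℕ) : Prop :=
  ∃ k, 0 < k ∧ k ≤ t ∧ k ≤ y ∧ (t - k, y - k) ∈ A

def diagSet (A : Set (ℕ × ℕ)) (t : ℕ) : Set ℕ := {y | diag A t y}

noncomputable def pRow (A : Set (ℕ × ℕ)) (t : ℕ) : ℕ :=
  sInf {y | y ∉ usedRows A t ∧ ¬ diagBefore A t y}

def gaps (A : Set (ℕ × ℕ)) (t : ℕ) : Set ℕ :=
  {y | ell A t < y ∧ y < uu A t ∧ ¬ diag A t y}

structure NaturalFrom (A : Set (ℕ × ℕ)) (mx : ℕ) : Prop where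
  mem_iff : ∀ x y, mx ≤ x → ((x, y) ∈ A ↔ ∀ q, WMove (x, y) q → q ∉ A)
  finite_column : ∀ x, {y | (x, y) ∈ A}.Finite

def GapsShiftFrom (A : Set (ℕ × ℕ)) (T : ℕ) : Prop :=
  ∀ t ≥ T, pRow A (t + 1) ≤ uu A t + 2 ∧ gaps A (t + 1) = (· + 1) '' gaps A t

def IsHighStep (A : Set (ℕ × ℕ)) (T s : ℕ) : Prop :=
  T ≤ s ∧ pRow A (s + 1) = uu A s + 2

variable {A : Set (ℕ × ℕ)} {mx T t s y g : ℕ}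

theorem diag_iff : diag A t y ↔ (t, y) ∈ A ∨ diagBefore A t y := by
  constructor
  · rintro ⟨k, hkt, hky, hk⟩
    rcases Nat.eq_zero_or_pos k with rfl | hk0
    · exact Or.inl (by simpa using hk)
    · exact Or.inr ⟨k, hk0, hkt, hky, hk⟩
  · rintro (h | ⟨k, -, hkt, hky, hk⟩)
    · exact ⟨0, Nat.zero_le _, Nat.zero_le _, by simpa using h⟩
    · exact ⟨k, hkt, hky, hk⟩

theorem diagBefore_succ_iff : diagBefore A (t + 1) y ↔ y ∈ (· + 1) '' diagSet A t := by
  constructor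
  · rintro ⟨k, hk0, hkt, hky, hk⟩
    refine ⟨y - 1, ⟨k - 1, by omega, by omega, ?_⟩, by simp only; omega⟩
    rwa [show t - (k - 1) = t + 1 - k by omega, show y - 1 - (k - 1) = y - k by omega]
  · rintro ⟨z, ⟨k, hkt, hkz, hk⟩, rfl⟩
    dsimp only
    exact ⟨k + 1, by omega, by omega, by omega, by simpa using hk⟩

theorem pRow_le (hy : y ∉ usedRows A t) (hy' : ¬ diagBefore A t y) : pRow A t ≤ y :=
  Nat.sInf_le ⟨hy, hy'⟩

theorem mem_usedRows_or_diagBefore_of_lt_pRow (h : y < pRow A t) :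
    y ∈ usedRows A t ∨ diagBefore A t y := by
  by_contra! hy
  exact h.not_ge (pRow_le hy.1 hy.2)

theorem ell_le (h : diag A t y) : ell A t ≤ y := Nat.sInf_le h

theorem gaps_finite (A : Set (ℕ × ℕ)) (t : ℕ) : (gaps A t).Finite :=
  (Set.finite_Iio (uu A t)).subset fun _ hy => hy.2.1

theorem GapsShiftFrom.mono (hG : GapsShiftFrom A T) (h : T ≤ t) : GapsShiftFrom A t :=
  fun s hs => hG s (h.trans hs)

theorem GapsShiftFrom.add_mem_gaps (hG : GapsShiftFrom A T) (hg : g ∈ gaps A T) (ht : T ≤ t) :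
    g + (t - T) ∈ gaps A t := by
  induction t, ht using Nat.le_induction with
  | base => simpa using hg
  | succ t ht ih =>
    rw [(hG t ht).2, show g + (t + 1 - T) = g + (t - T) + 1 by omega]
    exact ⟨_, ih, rfl⟩

namespace NaturalFrom

theorem of_altered {P N : Set (ℕ × ℕ)} {my : ℕ} (hbox : P ∪ N ⊆ Set.Iio mx ×ˢ Set.Iio my)
    (hA : ∀ p : ℕ × ℕ, p ∈ A ↔ (p ∈ P ∨ (p ∉ N ∧ ∀ q, WMove p q → q ∉ A))) :
    NaturalFrom A mx := by
  have hrule : ∀ x y, mx ≤ x ∨ my ≤ y → ((x, y) ∈ A ↔ ∀ q, WMove (x, y) q → q ∉ A) := by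
    intro x y hxy
    have hP : (x, y) ∉ P := fun h => by
      have := hbox (Or.inl h); simp only [Set.mem_prod, Set.mem_Iio] at this; omega
    have hN : (x, y) ∉ N := fun h => by
      have := hbox (Or.inr h); simp only [Set.mem_prod, Set.mem_Iio] at this; omega
    simp [hA (x, y), hP, hN]
  refine ⟨fun x y hx => hrule x y (Or.inl hx), fun x => ?_⟩
  have hlow : ∀ b b', b < b' → my ≤ b' → (x, b) ∈ A → (x, b') ∉ A := fun b b' hlt hb' hb h =>
    (hrule x b' (Or.inr hb')).1 h (x, b) (Or.inr (Or.inl ⟨rfl, hlt⟩)) hb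
  have hhigh : {y | (x, y) ∈ A ∧ my ≤ y}.Subsingleton := fun b hb b' hb' =>
    le_antisymm (not_lt.1 fun h => hlow b' b h hb.2 hb'.1 hb.1)
      (not_lt.1 fun h => hlow b b' h hb'.2 hb.1 hb'.1)
  refine ((Set.finite_Iio my).union hhigh.finite).subset fun y hy => ?_
  by_cases h : y < my
  · exact Or.inl h
  · exact Or.inr ⟨hy, not_lt.1 h⟩

variable (hA : NaturalFrom A mx)
include hA

theorem finite_fst_le (t : ℕ) : {p : ℕ × ℕ | p ∈ A ∧ p.1 ≤ t}.Finite := by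
  refine ((Set.finite_Iic t).biUnion fun x _ =>
    (Set.finite_singleton x).prod (hA.finite_column x)).subset ?_
  rintro ⟨x, y⟩ ⟨hxy, hx⟩
  exact Set.mem_biUnion hx ⟨rfl, hxy⟩

theorem usedRows_finite (t : ℕ) : (usedRows A t).Finite :=
  ((hA.finite_fst_le t).image Prod.snd).subset fun y ⟨x, hx, hxy⟩ => ⟨(x, y), ⟨hxy, hx.le⟩, rfl⟩

theorem diagSet_finite (t : ℕ) : (diagSet A t).Finite :=
  ((hA.finite_fst_le t).image fun p => p.2 + (t - p.1)).subset fun y ⟨k, hkt, hky, hk⟩ =>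
    ⟨(t - k, y - k), ⟨hk, Nat.sub_le t k⟩, by simp only; omega⟩

theorem pRow_not_attacked (t : ℕ) : pRow A t ∉ usedRows A t ∧ ¬ diagBefore A t (pRow A t) := by
  refine Nat.sInf_mem (s := {y | y ∉ usedRows A t ∧ ¬ diagBefore A t y}) ?_
  obtain ⟨y, hy⟩ := ((hA.usedRows_finite t).union (hA.diagSet_finite t)).infinite_compl.nonempty
  exact ⟨y, fun h => hy (Or.inl h), fun h => hy (Or.inr (diag_iff.2 (Or.inr h)))⟩

theorem mem_iff_not_attacked (ht : mx ≤ t) (y : ℕ) :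
    (t, y) ∈ A ↔ y ∉ usedRows A t ∧ ¬ diagBefore A t y ∧ ∀ y' < y, (t, y') ∉ A := by
  rw [hA.mem_iff t y ht]
  constructor
  · intro h
    exact ⟨fun ⟨x, hx, hxy⟩ => h (x, y) (Or.inl ⟨hx, rfl⟩) hxy,
      fun ⟨k, hk0, hkt, hky, hk⟩ =>
        h (t - k, y - k) (Or.inr (Or.inr ⟨k, hk0, hkt, hky, rfl, rfl⟩)) hk,
      fun y' hy' => h (t, y') (Or.inr (Or.inl ⟨rfl, hy'⟩))⟩
  · rintro ⟨hrow, hdiag, hcol⟩ ⟨x', y'⟩ hmove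
    rcases hmove with ⟨hx, hy⟩ | ⟨hx, hy⟩ | ⟨k, hk0, hkt, hky, hx, hy⟩ <;> dsimp only at hx hy
    · subst hy
      exact fun h => hrow ⟨x', hx, h⟩
    · subst hx
      exact hcol y' hy
    · subst hx hy
      exact fun h => hdiag ⟨k, hk0, hkt, hky, h⟩

theorem mem_iff_eq_pRow (ht : mx ≤ t) (y : ℕ) : (t, y) ∈ A ↔ y = pRow A t := by
  have key := hA.mem_iff_not_attacked ht
  obtain ⟨hrow, hdiag⟩ := hA.pRow_not_attacked t
  have hmem : (t, pRow A t) ∈ A := (key _).2 ⟨hrow, hdiag, fun y' hy' h' =>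
    hy'.not_ge (pRow_le ((key y').1 h').1 ((key y').1 h').2.1)⟩
  refine ⟨fun h => ?_, fun h => h ▸ hmem⟩
  obtain ⟨hy, hy', hbelow⟩ := (key y).1 h
  exact le_antisymm (not_lt.1 fun hlt => hbelow _ hlt hmem) (pRow_le hy hy')

theorem pRow_mem_diagSet (ht : mx ≤ t) : pRow A t ∈ diagSet A t :=
  ⟨0, Nat.zero_le _, Nat.zero_le _, by simpa using (hA.mem_iff_eq_pRow ht _).2 rfl⟩

theorem pRow_ne (hs : mx ≤ s) (hst : s < t) : pRow A t ≠ pRow A s := fun h =>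
  (hA.pRow_not_attacked t).1 ⟨s, hst, h ▸ (hA.mem_iff_eq_pRow hs _).2 rfl⟩

theorem mem_usedRows_of_le (hT : mx ≤ T) (h : y ∈ usedRows A t) :
    y ∈ usedRows A T ∨ ∃ s, T ≤ s ∧ s < t ∧ y = pRow A s := by
  obtain ⟨x, hxt, hxy⟩ := h
  by_cases hx : x < T
  · exact Or.inl ⟨x, hx, hxy⟩
  · exact Or.inr ⟨x, not_lt.1 hx, hxt, (hA.mem_iff_eq_pRow (hT.trans (not_lt.1 hx)) y).1 hxy⟩

theorem ell_mem (ht : mx ≤ t) : diag A t (ell A t) :=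
  Nat.sInf_mem ⟨_, hA.pRow_mem_diagSet ht⟩

theorem uu_mem (ht : mx ≤ t) : diag A t (uu A t) :=
  Nat.sSup_mem ⟨_, hA.pRow_mem_diagSet ht⟩ (hA.diagSet_finite t).bddAbove

theorem le_uu (h : diag A t y) : y ≤ uu A t :=
  le_csSup (hA.diagSet_finite t).bddAbove h

theorem ell_le_uu (ht : mx ≤ t) : ell A t ≤ uu A t :=
  hA.le_uu (hA.ell_mem ht)

theorem diagSet_succ (ht : mx ≤ t + 1) :
    diagSet A (t + 1) = insert (pRow A (t + 1)) ((· + 1) '' diagSet A t) := by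
  ext y
  rw [Set.mem_insert_iff, ← diagBefore_succ_iff, ← hA.mem_iff_eq_pRow ht]
  exact diag_iff

theorem ell_le_pRow_succ (ht : mx ≤ t) : ell A t ≤ pRow A (t + 1) := by
  by_contra! hlt
  obtain ⟨hrow, hdiag⟩ := hA.pRow_not_attacked (t + 1)
  have : pRow A t ≤ pRow A (t + 1) :=
    pRow_le (fun ⟨x, hx, hxy⟩ => hrow ⟨x, by omega, hxy⟩)
      (fun h => hlt.not_ge (ell_le (diag_iff.2 (Or.inr h))))
  exact hlt.not_ge ((ell_le (hA.pRow_mem_diagSet ht)).trans this)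

theorem ell_succ (ht : mx ≤ t) : ell A (t + 1) = min (pRow A (t + 1)) (ell A t + 1) := by
  have hD := hA.diagSet_succ (t := t) (by omega)
  apply le_antisymm
  · refine le_min (ell_le (hA.pRow_mem_diagSet (by omega))) (ell_le ?_)
    change ell A t + 1 ∈ diagSet A (t + 1)
    rw [hD]
    exact Set.mem_insert_of_mem _ ⟨_, hA.ell_mem ht, rfl⟩
  · have hmem : ell A (t + 1) ∈ diagSet A (t + 1) := hA.ell_mem (by omega)
    rw [hD] at hmem
    rcases hmem with h | ⟨z, hz, hze⟩
    · exact h ▸ min_le_left _ _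
    · have := ell_le hz
      simp only at hze
      omega

theorem uu_succ (ht : mx ≤ t) : uu A (t + 1) = max (pRow A (t + 1)) (uu A t + 1) := by
  have hD := hA.diagSet_succ (t := t) (by omega)
  apply le_antisymm
  · have hmem : uu A (t + 1) ∈ diagSet A (t + 1) := hA.uu_mem (by omega)
    rw [hD] at hmem
    rcases hmem with h | ⟨z, hz, hze⟩
    · exact h ▸ le_max_left _ _
    · have := hA.le_uu hz
      simp only at hze
      omega
  · refine max_le (hA.le_uu (hA.pRow_mem_diagSet (by omega))) (hA.le_uu ?_)
    change uu A t + 1 ∈ diagSet A (t + 1)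
    rw [hD]
    exact Set.mem_insert_of_mem _ ⟨_, hA.uu_mem ht, rfl⟩

theorem ell_mono (hs : mx ≤ s) (h : s ≤ t) : ell A s ≤ ell A t := by
  induction t, h using Nat.le_induction with
  | base => exact le_rfl
  | succ t hst ih =>
    have := hA.ell_succ (hs.trans hst)
    have := hA.ell_le_pRow_succ (hs.trans hst)
    omega

theorem uu_add_le (hs : mx ≤ s) (h : s ≤ t) : uu A s + (t - s) ≤ uu A t := by
  induction t, h using Nat.le_induction with
  | base => simp
  | succ t hst ih =>
    have := hA.uu_succ (hs.trans hst)
    omega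

theorem eventually_pRow_succ_le : ∃ T, mx ≤ T ∧ ∀ t ≥ T, pRow A (t + 1) ≤ uu A t + 2 := by
  obtain ⟨B, hB⟩ := (hA.usedRows_finite mx).bddAbove
  refine ⟨mx + B + 1, by omega, fun t ht => pRow_le (fun hrow => ?_) fun hdiag => ?_⟩
  · have := hA.uu_add_le le_rfl (show mx ≤ t by omega)
    rcases hA.mem_usedRows_of_le le_rfl hrow with h | ⟨s, hs, hst, he⟩
    · have := hB h
      omega
    · have := hA.le_uu (hA.pRow_mem_diagSet hs)
      have := hA.uu_add_le hs (show s ≤ t by omega)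
      omega
  · obtain ⟨z, hz, hze⟩ := diagBefore_succ_iff.1 hdiag
    have := hA.le_uu hz
    simp only at hze
    omega

theorem gaps_succ (ht : mx ≤ t) (hc : pRow A (t + 1) ≤ uu A t + 2) :
    gaps A (t + 1) = (· + 1) '' gaps A t \ {pRow A (t + 1)} := by
  have := hA.ell_succ ht
  have := hA.uu_succ ht
  have := hA.ell_le_pRow_succ ht
  have hD : ∀ y, diag A (t + 1) y ↔ y = pRow A (t + 1) ∨ y ∈ (· + 1) '' diagSet A t :=
    fun y => Set.ext_iff.1 (hA.diagSet_succ (by omega)) y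
  ext y
  constructor
  · rintro ⟨hℓy, hyu, hy⟩
    rw [hD, not_or] at hy
    have hz : y - 1 ∉ diagSet A t := fun hz => hy.2 ⟨y - 1, hz, by simp only; omega⟩
    have : y - 1 ≠ ell A t := fun h => hz (h ▸ hA.ell_mem ht)
    have : y - 1 ≠ uu A t := fun h => hz (h ▸ hA.uu_mem ht)
    exact ⟨⟨y - 1, ⟨by omega, by omega, hz⟩, by simp only; omega⟩, hy.1⟩
  · rintro ⟨⟨z, ⟨hℓz, hzu, hz⟩, rfl⟩, hne⟩
    dsimp only at hne ⊢
    refine ⟨by omega, by omega, fun h => ?_⟩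
    rcases (hD _).1 h with h | ⟨z', hz', hze⟩
    · exact hne h
    · simp only [add_left_inj] at hze
      exact hz (hze ▸ hz')

theorem ncard_gaps_succ_le (ht : mx ≤ t) (hc : pRow A (t + 1) ≤ uu A t + 2) :
    (gaps A (t + 1)).ncard ≤ (gaps A t).ncard := by
  rw [hA.gaps_succ ht hc]
  exact (Set.ncard_sdiff_singleton_le _ _).trans (Set.ncard_image_le (gaps_finite A t))

theorem gaps_succ_eq_image (ht : mx ≤ t) (hc : pRow A (t + 1) ≤ uu A t + 2)
    (h : (gaps A (t + 1)).ncard = (gaps A t).ncard) :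
    gaps A (t + 1) = (· + 1) '' gaps A t := by
  rw [hA.gaps_succ ht hc] at h ⊢
  refine Set.sdiff_singleton_eq_self fun hmem => ?_
  have := Set.ncard_sdiff_singleton_lt_of_mem hmem ((gaps_finite A t).image _)
  rw [h, Set.ncard_image_of_injective _ (add_left_injective 1)] at this
  exact lt_irrefl _ this

theorem exists_gapsShiftFrom : ∃ T, mx ≤ T ∧ GapsShiftFrom A T := by
  obtain ⟨T₁, hT₁, hc⟩ := hA.eventually_pRow_succ_le
  have hanti : Antitone fun n => (gaps A (T₁ + n)).ncard :=
    antitone_nat_of_succ_le fun n => hA.ncard_gaps_succ_le (t := T₁ + n) (by omega) (hc _ (by omega))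
  obtain ⟨n, hn⟩ := WellFoundedLT.antitone_chain_condition hanti
  refine ⟨T₁ + n, by omega, fun t ht =>
    ⟨hc t (by omega), hA.gaps_succ_eq_image (by omega) (hc t (by omega)) ?_⟩⟩
  have h₁ := hn (t - T₁) (by omega)
  have h₂ := hn (t + 1 - T₁) (by omega)
  simp only [show T₁ + (t - T₁) = t by omega, show T₁ + (t + 1 - T₁) = t + 1 by omega] at h₁ h₂
  rw [← h₁, ← h₂]

theorem pRow_succ_eq_ell_or (ht : mx ≤ t) (hc : pRow A (t + 1) ≤ uu A t + 2)
    (hG : gaps A (t + 1) = (· + 1) '' gaps A t) :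
    pRow A (t + 1) = ell A t ∨ pRow A (t + 1) = uu A t + 2 := by
  have := hA.ell_le_pRow_succ ht
  by_contra! hne
  have hnd : pRow A (t + 1) - 1 ∉ diagSet A t := fun h =>
    (hA.pRow_not_attacked (t + 1)).2 (diagBefore_succ_iff.2 ⟨_, h, by simp only; omega⟩)
  have : pRow A (t + 1) - 1 ≠ ell A t := fun h => hnd (h ▸ hA.ell_mem ht)
  have : pRow A (t + 1) - 1 ≠ uu A t := fun h => hnd (h ▸ hA.uu_mem ht)
  have hgap : pRow A (t + 1) ∈ gaps A (t + 1) :=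
    hG ▸ ⟨_, ⟨by omega, by omega, hnd⟩, by simp only; omega⟩
  exact hgap.2.2 (hA.pRow_mem_diagSet (by omega))

theorem pRow_succ_succ_ne (ht : mx ≤ t) (h : pRow A (t + 1) = ell A t) :
    pRow A (t + 2) ≠ ell A (t + 1) := by
  have := hA.ell_succ ht
  have := hA.pRow_ne (s := t + 1) (t := t + 2) (by omega) (by omega)
  omega

end NaturalFrom

namespace GapsShiftFrom

variable (hA : NaturalFrom A mx) (hT : mx ≤ T) (hG : GapsShiftFrom A T)
include hA hT hG

theorem isHighStep_or_succ (ht : T ≤ t) : IsHighStep A T t ∨ IsHighStep A T (t + 1) := by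
  rcases hA.pRow_succ_eq_ell_or (hT.trans ht) (hG t ht).1 (hG t ht).2 with h | h
  · refine Or.inr ⟨by omega, ?_⟩
    exact (hA.pRow_succ_eq_ell_or (by omega) (hG _ (by omega)).1 (hG _ (by omega)).2).resolve_left
      (hA.pRow_succ_succ_ne (hT.trans ht) h)
  · exact Or.inl ⟨ht, h⟩

open scoped Classical in
theorem uu_eq_add_count (ht : T ≤ t) :
    uu A t = uu A T + (t - T) + Nat.count (IsHighStep A T) t := by
  induction t, ht using Nat.le_induction with
  | base =>
    rw [Nat.count_of_forall_not fun s hs h => (h.1.trans_lt hs).false]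
    simp
  | succ t ht ih =>
    have := hA.uu_succ (hT.trans ht)
    have := hA.ell_le_uu (hT.trans ht)
    rw [Nat.count_succ]
    by_cases hp : IsHighStep A T t
    · rw [if_pos hp]
      have := hp.2
      omega
    · rw [if_neg hp]
      have := (hA.pRow_succ_eq_ell_or (hT.trans ht) (hG t ht).1 (hG t ht).2).resolve_right
        fun h => hp ⟨ht, h⟩
      omega

/-- At a late high step `t`, the row just above the shifted gap `g` is already occupied, and only
an earlier high step can have occupied it. -/
theorem exists_isHighStep_uu_eq (hg : g ∈ gaps A T) :
    ∃ T', ∀ t ≥ T', IsHighStep A T t → ∃ s < t, IsHighStep A T s ∧ uu A s + 1 = g + (t - T) := by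
  obtain ⟨B, hB⟩ := (hA.usedRows_finite T).bddAbove
  refine ⟨T + B + uu A T + 1, fun t ht hq => ?_⟩
  obtain ⟨hℓm, hmu, hmD⟩ := hG.add_mem_gaps hg (show T ≤ t by omega)
  have hrow : g + (t - T) + 1 ∈ usedRows A (t + 1) := by
    refine (mem_usedRows_or_diagBefore_of_lt_pRow (by rw [hq.2]; omega)).resolve_right
      fun h => hmD ?_
    obtain ⟨z, hz, hze⟩ := diagBefore_succ_iff.1 h
    simp only [add_left_inj] at hze
    exact hze ▸ hz
  rcases hA.mem_usedRows_of_le hT hrow with h | ⟨s, hTs, hst, he⟩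
  · have := hB h
    omega
  obtain rfl | hTs := hTs.eq_or_lt
  · have := hA.le_uu (hA.pRow_mem_diagSet hT)
    omega
  obtain ⟨s, rfl⟩ : ∃ s', s = s' + 1 := ⟨s - 1, by omega⟩
  rcases hA.pRow_succ_eq_ell_or (by omega) (hG s (by omega)).1 (hG s (by omega)).2 with h | h
  · have := hA.ell_mono (s := s) (t := t) (by omega) (by omega)
    omega
  · exact ⟨s, by omega, ⟨by omega, h⟩, by omega⟩

theorem setOf_isHighStep_infinite : (Set.ofPred (IsHighStep A T)).Infinite := by
  refine Set.infinite_of_forall_exists_gt fun a => ?_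
  rcases isHighStep_or_succ hA hT hG (t := max a T + 1) (by omega) with h | h
  · exact ⟨_, h, by omega⟩
  · exact ⟨_, h, by omega⟩

/-- Matching the `k`-th high step with the `j`-th one that occupied the row above the gap. -/
theorem exists_three_mul_lt_of_mem_gaps (hg : g ∈ gaps A T) : ∃ K, ∀ k ≥ K, ∃ j, 3 * j < 2 * k ∧
    uu A (Nat.nth (IsHighStep A T) j) + 1 = g + (Nat.nth (IsHighStep A T) k - T) := by
  classical
  have hinf := setOf_isHighStep_infinite hA hT hG
  have hstep : ∀ s, IsHighStep A T s → IsHighStep A T (s + 1) ∨ IsHighStep A T (s + 2) :=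
    fun s hs => isHighStep_or_succ hA hT hG (t := s + 1) (by have := hs.1; omega)
  obtain ⟨K, hK⟩ := exists_isHighStep_uu_eq hA hT hG hg
  refine ⟨K, fun k hk => ?_⟩
  have hk_mem := Nat.nth_mem_of_infinite hinf k
  obtain ⟨s, hst, hs, he⟩ := hK _ (hk.trans (Nat.nth_strictMono hinf).le_apply) hk_mem
  have hj : Nat.count (IsHighStep A T) s < k := by
    simpa [Nat.count_nth_of_infinite hinf] using Nat.count_strict_mono hs hst
  have hspread := Nat.nth_le_nth_add_two_mul hinf hstep hj.le
  have := uu_eq_add_count hA hT hG hs.1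
  have := hg.2.1
  have := hk_mem.1
  refine ⟨Nat.count (IsHighStep A T) s, ?_⟩
  rw [Nat.nth_count hs] at hspread ⊢
  exact ⟨by omega, he⟩

theorem gaps_eq_empty : gaps A T = ∅ := by
  by_contra hne
  obtain ⟨g, hg⟩ := Set.nonempty_iff_ne_empty.2 hne
  have hinf := setOf_isHighStep_infinite hA hT hG
  obtain ⟨K, hK⟩ := exists_three_mul_lt_of_mem_gaps hA hT hG hg
  choose! f hf₁ hf₂ using hK
  refine Nat.not_injOn_Ici_of_three_mul_lt hf₁ fun k hk k' hk' he => ?_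
  have h₁ := hf₂ k hk
  have h₂ := hf₂ k' hk'
  rw [he] at h₁
  have := (Nat.nth_mem_of_infinite hinf k).1
  have := (Nat.nth_mem_of_infinite hinf k').1
  exact (Nat.nth_strictMono hinf).injective (by omega)

end GapsShiftFrom

theorem saturated_of_gaps_eq_empty (hA : NaturalFrom A mx) (ht : mx ≤ t) (h : gaps A t = ∅) :
    Saturated A t := by
  intro y
  refine ⟨fun hy => ⟨ell_le hy, hA.le_uu hy⟩, fun ⟨h₁, h₂⟩ => by_contra fun hy => ?_⟩
  have : ell A t ≠ y := fun he => hy (he ▸ hA.ell_mem ht)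
  have : y ≠ uu A t := fun he => hy (he ▸ hA.uu_mem ht)
  exact Set.eq_empty_iff_forall_notMem.1 h y ⟨by omega, by omega, hy⟩

end AlteredWythoff

open AlteredWythoff in
theorem saturation_lemma_general (P N A : Set (ℕ × ℕ)) (mx my : ℕ)
    (hbox : P ∪ N ⊆ Set.Iio mx ×ˢ Set.Iio my)
    (hA : ∀ p : ℕ × ℕ, p ∈ A ↔ (p ∈ P ∨ (p ∉ N ∧ ∀ q, WMove p q → q ∉ A))) :
    ∃ t, mx ≤ t ∧ ∀ t', t ≤ t' → Saturated A t' := by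
  have hnat : NaturalFrom A mx := .of_altered hbox hA
  obtain ⟨T, hT, hG⟩ := hnat.exists_gapsShiftFrom
  exact ⟨T, hT, fun t ht => saturated_of_gaps_eq_empty hnat (hT.trans ht)
    ((hG.mono ht).gaps_eq_empty hnat (hT.trans ht))⟩

/-- Saturation Lemma: there exists a natural column `t` such that `t` and all
subsequent columns are saturated. -/
theorem saturation_lemma (P N A : Set (ℕ × ℕ)) (mx my : ℕ)
    (hPfin : P.Finite) (hNfin : N.Finite) (hdisj : Disjoint P N)
    (hbox : P ∪ N ⊆ Set.Iio mx ×ˢ Set.Iio my)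
    (hA : ∀ p : ℕ × ℕ, p ∈ A ↔ (p ∈ P ∨ (p ∉ N ∧ ∀ q, WMove p q → q ∉ A))) :
    ∃ t, mx ≤ t ∧ ∀ t', t ≤ t' → Saturated A t' :=
  saturation_lemma_general P N A mx my hbox hA
end

section
/- Let t₀ be a natural column of an altered Wythoff game such that t₀ and all subsequent columns are saturated. Then for every t > t₀, the bitstring S_t is obtained from S_{t−1} by applying the Wythoff update. -/
-- `row_t[y]` as a boolean: TRUE iff some column `x ≤ t` has a P-position in row `y`.
open Classical in
noncomputable def rowB (A : Set (ℕ × ℕ)) (t y : ℕ) : Bool :=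
  decide (∃ x ≤ t, (x, y) ∈ A)

/-- The bitstring `S_t = (row_t[ℓ_t], …, row_t[u_t])`. -/
noncomputable def Sstr (A : Set (ℕ × ℕ)) (t : ℕ) : List Bool :=
  (List.range (uu A t + 1 - ell A t)).map (fun j => rowB A t (ell A t + j))

/-- The Wythoff update of a bitstring: if the first character is `0`, change it
to `1` and append `0`; if the first character is `1`, remove it and append `01`. -/
def wupdate : List Bool → List Bool
  | [] => []
  | false :: rest => true :: (rest ++ [false])
  | true :: rest => rest ++ [false, true]

/-
In a natural column the rule defining `A` is the plain Wythoff rule, so column `t + 1` holds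
exactly one P-position: the least row `y` that is empty up to column `t` and whose diagonal
through `(t, y - 1)` is empty. If column `t` is saturated, every row below `ℓ_t` is occupied,
every row above `u_t` is empty, and the diagonals of column `t` block exactly the rows
`ℓ_t + 1, …, u_t + 1` of column `t + 1`. So the new P-position is `(t + 1, ℓ_t)` when the first
bit of `S_t` is 0 and `(t + 1, u_t + 2)` when it is 1; the diagonal interval of column `t + 1` is
then `[ℓ_t, u_t + 1]`, resp. `[ℓ_t + 1, u_t + 2]`, and `S_{t+1}` is the Wythoff update of `S_t`.
-/

def IsWythoffColumn (A : Set (ℕ × ℕ)) (x : ℕ) : Prop :=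
  ∀ y, (x, y) ∈ A ↔ ∀ q, WMove (x, y) q → q ∉ A

def Unblocked (A : Set (ℕ × ℕ)) (x y : ℕ) : Prop :=
  (∀ x' < x, (x', y) ∉ A) ∧ ∀ k, 0 < k → k ≤ x → k ≤ y → (x - k, y - k) ∉ A

section

variable {A : Set (ℕ × ℕ)} {x y t : ℕ}

theorem forall_wMove_notMem_iff :
    (∀ q, WMove (x, y) q → q ∉ A) ↔ Unblocked A x y ∧ ∀ y' < y, (x, y') ∉ A := by
  constructor
  · intro h
    exact ⟨⟨fun x' hx' => h _ (Or.inl ⟨hx', rfl⟩),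
      fun k hk hkx hky => h _ (Or.inr (Or.inr ⟨k, hk, hkx, hky, rfl, rfl⟩))⟩,
      fun y' hy' => h _ (Or.inr (Or.inl ⟨rfl, hy'⟩))⟩
  · rintro ⟨⟨hrow, hdiag⟩, hcol⟩ ⟨a, b⟩ hmove
    rcases hmove with ⟨ha, rfl⟩ | ⟨rfl, hb⟩ | ⟨k, hk, hkx, hky, rfl, rfl⟩
    · exact hrow a ha
    · exact hcol b hb
    · exact hdiag k hk hkx hky

theorem isWythoffColumn_of_le {P N : Set (ℕ × ℕ)} {mx my : ℕ}
    (hbox : P ∪ N ⊆ Set.Iio mx ×ˢ Set.Iio my)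
    (hA : ∀ p : ℕ × ℕ, p ∈ A ↔ (p ∈ P ∨ (p ∉ N ∧ ∀ q, WMove p q → q ∉ A)))
    (hx : mx ≤ x) : IsWythoffColumn A x := by
  intro y
  have hPN : (x, y) ∉ P ∪ N := fun h => (Set.mem_Iio.1 (hbox h).1).not_ge hx
  rw [Set.mem_union, not_or] at hPN
  rw [hA (x, y)]
  simp only [hPN.1, hPN.2, false_or, not_false_eq_true, true_and]

theorem IsWythoffColumn.mem_iff (h : IsWythoffColumn A x) :
    (x, y) ∈ A ↔ Unblocked A x y ∧ ∀ y' < y, (x, y') ∉ A :=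
  (h y).trans forall_wMove_notMem_iff

theorem IsWythoffColumn.mem_iff_eq_of_isLeast {y₀ : ℕ} (h : IsWythoffColumn A x)
    (hy₀ : IsLeast {y | Unblocked A x y} y₀) : (x, y) ∈ A ↔ y = y₀ := by
  induction y using Nat.strong_induction_on with
  | _ y ih =>
    rw [h.mem_iff]
    constructor
    · rintro ⟨hy, hbelow⟩
      refine le_antisymm ?_ (hy₀.2 hy)
      by_contra! hlt
      exact hbelow y₀ hlt ((ih y₀ hlt).2 rfl)
    · rintro rfl
      exact ⟨hy₀.1, fun y' hy' hmem => hy'.ne ((ih y' hy').1 hmem)⟩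

open Classical in
theorem rowB_eq_true_iff : rowB A t y = true ↔ ∃ x ≤ t, (x, y) ∈ A :=
  decide_eq_true_iff

open Classical in
theorem rowB_eq_false_iff : rowB A t y = false ↔ ¬∃ x ≤ t, (x, y) ∈ A :=
  decide_eq_false_iff_not

theorem unblocked_succ_iff :
    Unblocked A (t + 1) y ↔ rowB A t y = false ∧ ¬(1 ≤ y ∧ diag A t (y - 1)) := by
  rw [rowB_eq_false_iff]
  constructor
  · rintro ⟨hrow, hdiag⟩
    refine ⟨fun ⟨x, hx, hmem⟩ => hrow x (by omega) hmem, fun ⟨hy, k, hkt, hky, hmem⟩ => ?_⟩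
    refine hdiag (k + 1) (by omega) (by omega) (by omega) ?_
    rwa [show t + 1 - (k + 1) = t - k by omega, show y - (k + 1) = y - 1 - k by omega]
  · rintro ⟨hrow, hdiag⟩
    refine ⟨fun x hx hmem => hrow ⟨x, by omega, hmem⟩, fun k hk hkt hky hmem => hdiag ?_⟩
    refine ⟨by omega, k - 1, by omega, by omega, ?_⟩
    rwa [show t - (k - 1) = t + 1 - k by omega, show y - 1 - (k - 1) = y - k by omega]

theorem diag_succ_iff :
    diag A (t + 1) y ↔ (t + 1, y) ∈ A ∨ (1 ≤ y ∧ diag A t (y - 1)) := by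
  constructor
  · rintro ⟨_ | k, hkt, hky, hmem⟩
    · exact Or.inl hmem
    · refine Or.inr ⟨by omega, k, by omega, by omega, ?_⟩
      rwa [show t - k = t + 1 - (k + 1) by omega, show y - 1 - k = y - (k + 1) by omega]
  · rintro (hmem | ⟨hy, k, hkt, hky, hmem⟩)
    · exact ⟨0, by omega, by omega, hmem⟩
    · refine ⟨k + 1, by omega, by omega, ?_⟩
      rwa [show t + 1 - (k + 1) = t - k by omega, show y - (k + 1) = y - 1 - k by omega]

theorem rowB_succ {y₀ : ℕ} (hnew : ∀ y, (t + 1, y) ∈ A ↔ y = y₀) :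
    rowB A (t + 1) y = (rowB A t y || decide (y = y₀)) := by
  rw [Bool.eq_iff_iff, Bool.or_eq_true, rowB_eq_true_iff, rowB_eq_true_iff, decide_eq_true_iff,
    ← hnew]
  constructor
  · rintro ⟨x, hx, hmem⟩
    rcases Nat.lt_or_ge x (t + 1) with hlt | hge
    · exact Or.inl ⟨x, by omega, hmem⟩
    · exact Or.inr (by rwa [show t + 1 = x by omega])
  · rintro (⟨x, hx, hmem⟩ | hmem)
    · exact ⟨x, by omega, hmem⟩
    · exact ⟨t + 1, le_rfl, hmem⟩

theorem ell_uu_eq_of_diag_iff {a b : ℕ} (h : ∀ y, diag A t y ↔ a ≤ y ∧ y ≤ b) (hab : a ≤ b) :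
    ell A t = a ∧ uu A t = b := by
  have hIcc : {y | diag A t y} = Set.Icc a b := Set.ext h
  exact ⟨by rw [ell, hIcc, csInf_Icc hab], by rw [uu, hIcc, csSup_Icc hab]⟩

theorem sstr_eq_map_range' :
    Sstr A t = (List.range' (ell A t) (uu A t + 1 - ell A t)).map (rowB A t) := by
  rw [Sstr, List.range'_eq_map_range, List.map_map]
  rfl

namespace Saturated

theorem ell_le_uu (h : Saturated A t) : ell A t ≤ uu A t := by
  by_contra! hlt
  have hempty : {y | diag A t y} = ∅ :=
    Set.eq_empty_of_forall_notMem fun y hy => by have := (h y).1 hy; omega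
  have hell : ell A t = 0 := by rw [ell, hempty, Nat.sInf_empty]
  omega

theorem diag_pred_iff (h : Saturated A t) :
    (1 ≤ y ∧ diag A t (y - 1)) ↔ ell A t + 1 ≤ y ∧ y ≤ uu A t + 1 := by
  rw [h]
  omega

theorem rowB_of_uu_lt (h : Saturated A t) (hy : uu A t < y) : rowB A t y = false := by
  rw [rowB_eq_false_iff]
  rintro ⟨x, hx, hmem⟩
  have hdiag : diag A t (y + (t - x)) :=
    ⟨t - x, by omega, by omega, by rwa [show t - (t - x) = x by omega, Nat.add_sub_cancel]⟩
  have := ((h _).1 hdiag).2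
  omega

theorem rowB_of_lt_ell (h : Saturated A t) (hcol : IsWythoffColumn A t) (hy : y < ell A t) :
    rowB A t y = true := by
  by_contra hfalse
  rw [Bool.not_eq_true, rowB_eq_false_iff] at hfalse
  have hno_diag : ∀ y' < ell A t, ¬diag A t y' := fun y' hy' hd => by
    have := ((h y').1 hd).1
    omega
  -- `(t, y)` would be a P-position: its row, column and diagonal are all free.
  refine hfalse ⟨t, le_rfl, hcol.mem_iff.2 ⟨⟨fun x hx hmem => hfalse ⟨x, hx.le, hmem⟩, ?_⟩, ?_⟩⟩
  · exact fun k _ hkt hky hmem => hno_diag y hy ⟨k, hkt, hky, hmem⟩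
  · exact fun y' hy' hmem => hno_diag y' (by omega) ⟨0, by omega, by omega, by simpa using hmem⟩

theorem isLeast_unblocked_of_rowB_false (h : Saturated A t) (hcol : IsWythoffColumn A t)
    (h0 : rowB A t (ell A t) = false) : IsLeast {y | Unblocked A (t + 1) y} (ell A t) := by
  refine ⟨?_, fun y hy => ?_⟩
  · rw [Set.mem_ofPred_eq, unblocked_succ_iff, h.diag_pred_iff]
    exact ⟨h0, by omega⟩
  · rw [Set.mem_ofPred_eq, unblocked_succ_iff] at hy
    by_contra! hlt
    simp [h.rowB_of_lt_ell hcol hlt] at hy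

theorem isLeast_unblocked_of_rowB_true (h : Saturated A t) (hcol : IsWythoffColumn A t)
    (h1 : rowB A t (ell A t) = true) : IsLeast {y | Unblocked A (t + 1) y} (uu A t + 2) := by
  refine ⟨?_, fun y hy => ?_⟩
  · rw [Set.mem_ofPred_eq, unblocked_succ_iff, h.diag_pred_iff]
    exact ⟨h.rowB_of_uu_lt (by omega), by omega⟩
  · rw [Set.mem_ofPred_eq, unblocked_succ_iff, h.diag_pred_iff] at hy
    by_contra! hlt
    rcases lt_trichotomy y (ell A t) with hy' | rfl | hy'
    · simp [h.rowB_of_lt_ell hcol hy'] at hy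
    · simp [h1] at hy
    · exact hy.2 ⟨by omega, by omega⟩

theorem sstr_succ_of_rowB_false (h : Saturated A t) (hcol : IsWythoffColumn A t)
    (hcol' : IsWythoffColumn A (t + 1)) (h0 : rowB A t (ell A t) = false) :
    Sstr A (t + 1) = wupdate (Sstr A t) := by
  have hnew : ∀ y, (t + 1, y) ∈ A ↔ y = ell A t := fun _ =>
    hcol'.mem_iff_eq_of_isLeast (h.isLeast_unblocked_of_rowB_false hcol h0)
  have hlu := h.ell_le_uu
  obtain ⟨hell, huu⟩ : ell A (t + 1) = ell A t ∧ uu A (t + 1) = uu A t + 1 :=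
    ell_uu_eq_of_diag_iff (fun y => by rw [diag_succ_iff, hnew, h.diag_pred_iff]; omega)
      (by omega)
  have hrow : ∀ y, y ≠ ell A t → rowB A (t + 1) y = rowB A t y := fun y hy => by
    rw [rowB_succ hnew, decide_eq_false hy, Bool.or_false]
  obtain ⟨n, hn⟩ := Nat.exists_eq_add_of_le hlu
  rw [sstr_eq_map_range', sstr_eq_map_range', hell, huu, hn,
    show ell A t + n + 1 + 1 - ell A t = n + 1 + 1 by omega,
    show ell A t + n + 1 - ell A t = n + 1 by omega,
    List.range'_succ (s := ell A t) (n := n + 1), List.range'_succ (s := ell A t) (n := n),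
    List.range'_concat (s := ell A t + 1) (n := n)]
  simp only [List.map_cons, List.map_append, List.map_nil, h0, wupdate]
  have hfirst : rowB A (t + 1) (ell A t) = true := by
    rw [rowB_succ hnew, decide_eq_true rfl, Bool.or_true]
  have hmid : (List.range' (ell A t + 1) n).map (rowB A (t + 1)) =
      (List.range' (ell A t + 1) n).map (rowB A t) :=
    List.map_congr_left fun y hy => hrow y (by rw [List.mem_range'_1] at hy; omega)
  have hlast : rowB A (t + 1) (ell A t + 1 + 1 * n) = false := by
    rw [hrow _ (by omega)]
    exact h.rowB_of_uu_lt (by omega)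
  rw [hfirst, hmid, hlast]

theorem sstr_succ_of_rowB_true (h : Saturated A t) (hcol : IsWythoffColumn A t)
    (hcol' : IsWythoffColumn A (t + 1)) (h1 : rowB A t (ell A t) = true) :
    Sstr A (t + 1) = wupdate (Sstr A t) := by
  have hnew : ∀ y, (t + 1, y) ∈ A ↔ y = uu A t + 2 := fun _ =>
    hcol'.mem_iff_eq_of_isLeast (h.isLeast_unblocked_of_rowB_true hcol h1)
  have hlu := h.ell_le_uu
  obtain ⟨hell, huu⟩ : ell A (t + 1) = ell A t + 1 ∧ uu A (t + 1) = uu A t + 2 :=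
    ell_uu_eq_of_diag_iff (fun y => by rw [diag_succ_iff, hnew, h.diag_pred_iff]; omega)
      (by omega)
  have hrow : ∀ y, y ≠ uu A t + 2 → rowB A (t + 1) y = rowB A t y := fun y hy => by
    rw [rowB_succ hnew, decide_eq_false hy, Bool.or_false]
  obtain ⟨n, hn⟩ := Nat.exists_eq_add_of_le hlu
  rw [sstr_eq_map_range', sstr_eq_map_range', hell, huu, hn,
    show ell A t + n + 2 + 1 - (ell A t + 1) = n + 1 + 1 by omega,
    show ell A t + n + 1 - ell A t = n + 1 by omega,
    List.range'_succ (s := ell A t) (n := n), List.range'_concat (s := ell A t + 1) (n := n + 1),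
    List.range'_concat (s := ell A t + 1) (n := n)]
  simp only [List.map_cons, List.map_append, List.map_nil, h1, wupdate]
  have hmid : (List.range' (ell A t + 1) n).map (rowB A (t + 1)) =
      (List.range' (ell A t + 1) n).map (rowB A t) :=
    List.map_congr_left fun y hy => hrow y (by rw [List.mem_range'_1] at hy; omega)
  have hpenultimate : rowB A (t + 1) (ell A t + 1 + 1 * n) = false := by
    rw [hrow _ (by omega)]
    exact h.rowB_of_uu_lt (by omega)
  have hlast : rowB A (t + 1) (ell A t + 1 + 1 * (n + 1)) = true := by
    rw [rowB_succ hnew, decide_eq_true (by omega), Bool.or_true]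
  rw [hmid, hpenultimate, hlast, List.append_assoc]
  rfl

end Saturated

end

theorem string_update_lemma_general (P N A : Set (ℕ × ℕ)) (mx my : ℕ)
    (hbox : P ∪ N ⊆ Set.Iio mx ×ˢ Set.Iio my)
    (hA : ∀ p : ℕ × ℕ, p ∈ A ↔ (p ∈ P ∨ (p ∉ N ∧ ∀ q, WMove p q → q ∉ A)))
    (t₀ : ℕ) (ht₀ : mx ≤ t₀) (hsat : ∀ t', t₀ ≤ t' → Saturated A t') :
    ∀ t, t₀ ≤ t → Sstr A (t + 1) = wupdate (Sstr A t) := by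
  intro t ht
  have hcol := isWythoffColumn_of_le hbox hA (ht₀.trans ht)
  have hcol' := isWythoffColumn_of_le hbox hA (ht₀.trans (ht.trans t.le_succ))
  cases h0 : rowB A t (ell A t)
  · exact (hsat t ht).sstr_succ_of_rowB_false hcol hcol' h0
  · exact (hsat t ht).sstr_succ_of_rowB_true hcol hcol' h0

/-- String Update Lemma: after saturation has occurred, each bitstring `S_t`
is obtained from `S_{t-1}` by the Wythoff update. -/
theorem string_update_lemma (P N A : Set (ℕ × ℕ)) (mx my : ℕ)
    (hPfin : P.Finite) (hNfin : N.Finite) (hdisj : Disjoint P N)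
    (hbox : P ∪ N ⊆ Set.Iio mx ×ˢ Set.Iio my)
    (hA : ∀ p : ℕ × ℕ, p ∈ A ↔ (p ∈ P ∨ (p ∉ N ∧ ∀ q, WMove p q → q ∉ A)))
    (t₀ : ℕ) (ht₀ : mx ≤ t₀) (hsat : ∀ t', t₀ ≤ t' → Saturated A t') :
    ∀ t, t₀ ≤ t → Sstr A (t + 1) = wupdate (Sstr A t) :=
  string_update_lemma_general P N A mx my hbox hA t₀ ht₀ hsat
end

section
/- Let A be the set of P-positions of an altered Wythoff game with alteration sets contained in [0, m_x−1] × [0, m_y−1]. Then every natural column t ≥ m_x contains exactly one P-position, i.e., there is exactly one y with (t,y) ∈ A; moreover this y satisfies y ≤ m_y + 2t. -/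
section Game

variable {α : Type*} {M : α → α → Prop} {P N A : Set α}

theorem not_mem_of_move_of_mem (hA : ∀ p, p ∈ A ↔ (p ∈ P ∨ (p ∉ N ∧ ∀ q, M p q → q ∉ A)))
    {p q : α} (hp : p ∈ A) (hpP : p ∉ P) (hpq : M p q) : q ∉ A :=
  (((hA p).1 hp).resolve_left hpP).2 q hpq

theorem exists_move_mem_of_not_mem (hA : ∀ p, p ∈ A ↔ (p ∈ P ∨ (p ∉ N ∧ ∀ q, M p q → q ∉ A)))
    {p : α} (hp : p ∉ A) (hpN : p ∉ N) : ∃ q, M p q ∧ q ∈ A := by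
  by_contra! h
  exact hp ((hA p).2 (Or.inr ⟨hpN, h⟩))

end Game

section AlteredWythoff

variable {P N A : Set (ℕ × ℕ)} {my : ℕ}

theorem WMove.vertical {x y y' : ℕ} (h : y' < y) : WMove (x, y) (x, y') :=
  Or.inr (Or.inl ⟨rfl, h⟩)

theorem exists_mem_below_of_not_mem
    (hA : ∀ p, p ∈ A ↔ (p ∈ P ∨ (p ∉ N ∧ ∀ q, WMove p q → q ∉ A)))
    (hlow : ∀ p ∈ P ∪ N, p.2 < my) {x y : ℕ}
    (hbound : ∀ x' < x, ∀ g, (x', g) ∈ A → (x', g) ∉ P → g ≤ my + 2 * x')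
    (hy : my + 2 * x ≤ y) (hxy : (x, y) ∉ A) : ∃ y' < y, (x, y') ∈ A := by
  have hnotP : ∀ p : ℕ × ℕ, my ≤ p.2 → p ∉ P := fun p hp h => by
    have := hlow p (Or.inl h); omega
  have hnotN : ∀ p : ℕ × ℕ, my ≤ p.2 → p ∉ N := fun p hp h => by
    have := hlow p (Or.inr h); omega
  obtain ⟨⟨qx, qy⟩, hmove, hq⟩ := exists_move_mem_of_not_mem hA hxy (hnotN (x, y) (by omega))
  rcases hmove with ⟨hqx, hqy⟩ | ⟨hqx, hqy⟩ | ⟨k, hk, hkx, -, hqx, hqy⟩ <;> dsimp only at *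
  · subst qy
    have := hbound qx hqx y hq (hnotP (qx, y) (by omega))
    omega
  · subst qx
    exact ⟨qy, hqy, hq⟩
  · subst qx qy
    have := hbound (x - k) (by omega) (y - k) hq (hnotP _ (by dsimp only; omega))
    omega

theorem snd_le_of_mem_of_not_mem
    (hA : ∀ p, p ∈ A ↔ (p ∈ P ∨ (p ∉ N ∧ ∀ q, WMove p q → q ∉ A)))
    (hlow : ∀ p ∈ P ∪ N, p.2 < my) (x g : ℕ) (hg : (x, g) ∈ A) (hgP : (x, g) ∉ P) :
    g ≤ my + 2 * x := by
  induction x using Nat.strong_induction_on generalizing g with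
  | _ x ih =>
  by_contra! hlt
  have hcorner : (x, my + 2 * x) ∉ A := not_mem_of_move_of_mem hA hg hgP (WMove.vertical hlt)
  obtain ⟨y, hy, hyA⟩ := exists_mem_below_of_not_mem hA hlow ih le_rfl hcorner
  exact not_mem_of_move_of_mem hA hg hgP (WMove.vertical (hy.trans hlt)) hyA

theorem exists_mem_column
    (hA : ∀ p, p ∈ A ↔ (p ∈ P ∨ (p ∉ N ∧ ∀ q, WMove p q → q ∉ A)))
    (hlow : ∀ p ∈ P ∪ N, p.2 < my) (x : ℕ) : ∃ y, (x, y) ∈ A := by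
  by_cases h : (x, my + 2 * x) ∈ A
  · exact ⟨_, h⟩
  · obtain ⟨y, -, hy⟩ := exists_mem_below_of_not_mem hA hlow
      (fun x' _ => snd_le_of_mem_of_not_mem hA hlow x') le_rfl h
    exact ⟨y, hy⟩

theorem snd_eq_of_mem_of_not_mem
    (hA : ∀ p, p ∈ A ↔ (p ∈ P ∨ (p ∉ N ∧ ∀ q, WMove p q → q ∉ A)))
    {x y z : ℕ} (hy : (x, y) ∈ A) (hyP : (x, y) ∉ P) (hz : (x, z) ∈ A) (hzP : (x, z) ∉ P) :
    z = y := by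
  by_contra hne
  rcases Nat.lt_or_gt_of_ne hne with h | h
  · exact not_mem_of_move_of_mem hA hy hyP (WMove.vertical h) hz
  · exact not_mem_of_move_of_mem hA hz hzP (WMove.vertical h) hy

end AlteredWythoff

theorem natural_column_unique_P_general (P N A : Set (ℕ × ℕ)) (mx my : ℕ)
    (hbox : P ∪ N ⊆ Set.Iio mx ×ˢ Set.Iio my)
    (hA : ∀ p : ℕ × ℕ, p ∈ A ↔ (p ∈ P ∨ (p ∉ N ∧ ∀ q, WMove p q → q ∉ A)))
    (t : ℕ) (ht : mx ≤ t) :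
    (∃! y : ℕ, (t, y) ∈ A) ∧ (∀ y : ℕ, (t, y) ∈ A → y ≤ my + 2 * t) := by
  have hlow : ∀ p ∈ P ∪ N, p.2 < my := fun p hp => (hbox hp).2
  have hcolumn : ∀ y, (t, y) ∉ P := fun y hy => by
    have := (hbox (Or.inl hy)).1
    simp only [Set.mem_Iio] at this
    omega
  obtain ⟨y, hy⟩ := exists_mem_column hA hlow t
  exact ⟨⟨y, hy, fun z hz => snd_eq_of_mem_of_not_mem hA hy (hcolumn y) hz (hcolumn z)⟩,
    fun z hz => snd_le_of_mem_of_not_mem hA hlow t z hz (hcolumn z)⟩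

/-- Every natural column `t ≥ m_x` of an altered Wythoff game contains exactly
one P-position, and that P-position has height at most `m_y + 2t`. -/
theorem natural_column_unique_P (P N A : Set (ℕ × ℕ)) (mx my : ℕ)
    (hPfin : P.Finite) (hNfin : N.Finite) (hdisj : Disjoint P N)
    (hbox : P ∪ N ⊆ Set.Iio mx ×ˢ Set.Iio my)
    (hA : ∀ p : ℕ × ℕ, p ∈ A ↔ (p ∈ P ∨ (p ∉ N ∧ ∀ q, WMove p q → q ∉ A)))
    (t : ℕ) (ht : mx ≤ t) :
    (∃! y : ℕ, (t, y) ∈ A) ∧ (∀ y : ℕ, (t, y) ∈ A → y ≤ my + 2 * t) :=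
  natural_column_unique_P_general P N A mx my hbox hA t ht
end

section
/- Let S and T be two arbitrary bitstrings of the same length, and define the sequences S = S_0, S_1, S_2, … and T = T_0, T_1, T_2, … by repeatedly applying the Wythoff update to each. Then there exists a time t such that S_t and T_t are balanced. -/
/-- Two bitstrings are balanced if they have the same length and the same
number of ones. -/
def BalancedBits (S T : List Bool) : Prop :=
  S.length = T.length ∧ S.count true = T.count true

/-!
Read a bitstring as a queue. Serving its front letter takes two updates for a `0` and one for a `1`,
and appends `passBlock` of it (`001` resp. `01`); the number of ones goes up exactly at the first
update spent on a `0`. So the front letters read over time form the word `W = τ S · μ W`, where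
`τ = frontBlock` (`0 ↦ 01`, `1 ↦ 1`) and `μ = traceBlock` (`0 ↦ 01`, `1 ↦ 011`), and since every
`μ`-block has one `0` and ends in `1`, the number `c t` of ones after `t` updates satisfies
`c (2n + 3t - c t) = n + t = c (2n + 3t - c t - 1)` with `n = |S|`. Moreover `c` grows by at most
one in any two updates. Along the times `s_k = n F_{2k+3} - n` these facts make the defect
`n F_{2k+1} - c s_k` drop by at least one per step, so at `t = s_n` the number of ones is
`n F_{2n+1}`, which depends only on `n`. The pairs `(s_k, n F_{2k+1})` are the orbit of `(n, n)`
under `(s, g) ↦ (2n + 3s - g, n + s)`, the map read off from the self-similarity.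
-/

open Function List

lemma le_add_div_two_of_add_two_le {c : ℕ → ℕ} (hmono : Monotone c)
    (hstep : ∀ t, c (t + 2) ≤ c t + 1) (a d : ℕ) : c (a + d) ≤ c a + (d + 1) / 2 := by
  induction d using Nat.strong_induction_on with
  | _ d ih =>
    match d with
    | 0 => simp
    | 1 =>
      have : c (a + 1) ≤ c (a + 2) := hmono (by omega)
      have := hstep a
      omega
    | d + 2 =>
      have := ih d (by omega)
      have := hstep (a + d)
      rw [← add_assoc]
      omega

structure IsSelfSimilarCount (c : ℕ → ℕ) (n : ℕ) : Prop where
  monotone : Monotone c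
  add_two_le : ∀ t, c (t + 2) ≤ c t + 1
  selfSimilar : ∀ t, c (2 * n + 3 * t - c t) = n + t ∧ c (2 * n + 3 * t - c t - 1) = n + t

def syncTime (n k : ℕ) : ℕ := n * Nat.fib (2 * k + 3) - n

def syncCount (n k : ℕ) : ℕ := n * Nat.fib (2 * k + 1)

lemma fib_add_four_add_fib (m : ℕ) : Nat.fib (m + 4) + Nat.fib m = 3 * Nat.fib (m + 2) := by
  have h2 : Nat.fib (m + 2) = Nat.fib m + Nat.fib (m + 1) := Nat.fib_add_two
  have h3 : Nat.fib (m + 3) = Nat.fib (m + 1) + Nat.fib (m + 2) := Nat.fib_add_two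
  have h4 : Nat.fib (m + 4) = Nat.fib (m + 2) + Nat.fib (m + 3) := Nat.fib_add_two
  omega

lemma le_mul_fib (n : ℕ) {m : ℕ} (hm : m ≠ 0) : n ≤ n * Nat.fib m :=
  Nat.le_mul_of_pos_right n (Nat.fib_pos.mpr (Nat.pos_of_ne_zero hm))

lemma syncTime_zero (n : ℕ) : syncTime n 0 = n := by
  simp only [syncTime, show Nat.fib (2 * 0 + 3) = 2 from rfl]
  omega

lemma syncCount_zero (n : ℕ) : syncCount n 0 = n := by
  simp [syncCount]

lemma syncTime_succ_add_syncCount (n k : ℕ) :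
    syncTime n (k + 1) + syncCount n k = 2 * n + 3 * syncTime n k := by
  have hfib : n * Nat.fib (2 * k + 5) + n * Nat.fib (2 * k + 1) =
      3 * (n * Nat.fib (2 * k + 3)) := by
    rw [← mul_add, fib_add_four_add_fib, Nat.mul_left_comm]
  have h3 := le_mul_fib n (m := 2 * k + 3) (by omega)
  have h5 := le_mul_fib n (m := 2 * k + 5) (by omega)
  simp only [syncTime, syncCount, show 2 * (k + 1) + 3 = 2 * k + 5 by ring]
  omega

lemma syncCount_succ (n k : ℕ) : syncCount n (k + 1) = n + syncTime n k := by
  have := le_mul_fib n (m := 2 * k + 3) (by omega)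
  simp only [syncTime, syncCount, show 2 * (k + 1) + 1 = 2 * k + 3 by ring]
  omega

namespace IsSelfSimilarCount

variable {c : ℕ → ℕ} {n : ℕ}

lemma defect_le_pred (hc : IsSelfSimilarCount c n) {s g s' g' : ℕ}
    (hs : s' + g = 2 * n + 3 * s) (hg : g' = n + s) (hle : c s ≤ g) :
    c s' ≤ g' ∧ g' - c s' ≤ g - c s - 1 := by
  obtain ⟨hat, hbefore⟩ := hc.selfSimilar s
  -- self-similarity at `s` evaluates `c` at `s'` shifted by the defect `g - c s`
  rw [show 2 * n + 3 * s - c s = s' + (g - c s) by omega, ← hg] at hat hbefore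
  have hle' : c s' ≤ g' := hat ▸ hc.monotone (Nat.le_add_right s' _)
  refine ⟨hle', ?_⟩
  rcases Nat.eq_zero_or_pos (g - c s) with h0 | hpos
  · rw [h0, add_zero] at hat
    omega
  · have := le_add_div_two_of_add_two_le hc.monotone hc.add_two_le s' (g - c s - 1)
    rw [show s' + (g - c s - 1) = s' + (g - c s) - 1 by omega] at this
    omega

lemma defect_syncTime_le (hc : IsSelfSimilarCount c n) (h0 : c 0 ≤ n) (k : ℕ) :
    c (syncTime n k) ≤ syncCount n k ∧ syncCount n k - c (syncTime n k) ≤ n - k := by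
  induction k with
  | zero =>
    have := hc.monotone (show n ≤ 2 * n + 3 * 0 - c 0 by omega)
    rw [(hc.selfSimilar 0).1] at this
    rw [syncTime_zero, syncCount_zero]
    omega
  | succ k ih =>
    have := hc.defect_le_pred (syncTime_succ_add_syncCount n k) (syncCount_succ n k) ih.1
    omega

lemma eq_syncCount (hc : IsSelfSimilarCount c n) (h0 : c 0 ≤ n) :
    c (syncTime n n) = syncCount n n := by
  have := hc.defect_syncTime_le h0 n
  omega

end IsSelfSimilarCount

def passBlock : Bool → List Bool
  | false => [false, false, true]
  | true => [false, true]

def frontBlock : Bool → List Bool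
  | false => [false, true]
  | true => [true]

def traceBlock : Bool → List Bool
  | false => [false, true]
  | true => [false, true, true]

def passImage (X : List Bool) : List Bool := X.flatMap passBlock

def frontTrace (X : List Bool) : List Bool := X.flatMap frontBlock

def traceSubst (Y : List Bool) : List Bool := Y.flatMap traceBlock

@[simp] lemma passImage_cons (b : Bool) (X : List Bool) :
    passImage (b :: X) = passBlock b ++ passImage X := rfl

@[simp] lemma frontTrace_cons (b : Bool) (X : List Bool) :
    frontTrace (b :: X) = frontBlock b ++ frontTrace X := rfl

lemma wupdate_iterate_length_frontTrace (X C : List Bool) :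
    wupdate^[(frontTrace X).length] (X ++ C) = C ++ passImage X := by
  induction X generalizing C with
  | nil => simp [frontTrace, passImage]
  | cons b X ih =>
    cases b <;> simp [frontBlock, passBlock, wupdate, ih]

lemma count_true_wupdate_iterate_append (X C : List Bool) {t : ℕ}
    (ht : t ≤ (frontTrace X).length) :
    (wupdate^[t] (X ++ C)).count true =
      (X ++ C).count true + ((frontTrace X).take t).count false := by
  induction X generalizing C t with
  | nil => simp_all [frontTrace]
  | cons b X ih =>
    match b, t with
    | _, 0 => simp
    | true, t + 1 =>
      simp only [frontTrace_cons, frontBlock, cons_append, nil_append, length_cons] at ht ⊢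
      rw [iterate_succ_apply, take_succ_cons]
      simp [wupdate, ih (C ++ [false, true]) (t := t) (by omega)]
      omega
    | false, 1 => simp [wupdate, frontBlock]
    | false, t + 2 =>
      simp only [frontTrace_cons, frontBlock, cons_append, nil_append, length_cons] at ht ⊢
      rw [iterate_succ_apply, iterate_succ_apply, take_succ_cons, take_succ_cons]
      simp [wupdate, ih (C ++ [false, false, true]) (t := t) (by omega)]
      omega

lemma length_frontTrace (X : List Bool) :
    (frontTrace X).length = X.length + X.count false := by
  induction X with
  | nil => rfl
  | cons b X ih => cases b <;> simp [frontBlock, ih] <;> omega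

lemma count_false_frontTrace (X : List Bool) : (frontTrace X).count false = X.count false := by
  induction X with
  | nil => rfl
  | cons b X ih => cases b <;> simp [frontBlock, ih]

lemma count_true_passImage (X : List Bool) : (passImage X).count true = X.length := by
  induction X with
  | nil => rfl
  | cons b X ih => cases b <;> simp [passBlock, ih]

lemma count_false_traceSubst (Y : List Bool) : (traceSubst Y).count false = Y.length := by
  induction Y with
  | nil => rfl
  | cons b Y ih => cases b <;> simp [traceSubst, traceBlock] at ih ⊢ <;> omega

lemma traceSubst_append (Y Z : List Bool) :
    traceSubst (Y ++ Z) = traceSubst Y ++ traceSubst Z :=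
  flatMap_append

lemma length_traceSubst_add_count_false (Y : List Bool) :
    (traceSubst Y).length + Y.count false = 3 * Y.length := by
  induction Y with
  | nil => rfl
  | cons b Y ih => cases b <;> simp [traceSubst, traceBlock] at ih ⊢ <;> omega

lemma frontTrace_passImage (X : List Bool) :
    frontTrace (passImage X) = traceSubst (frontTrace X) := by
  simp only [frontTrace, passImage, traceSubst, flatMap_assoc]
  congr 1
  funext b
  cases b <;> rfl

def frontTraceIter : ℕ → List Bool → List Bool
  | 0, _ => []
  | k + 1, X => frontTrace X ++ frontTraceIter k (passImage X)

lemma frontTraceIter_passImage (k : ℕ) (X : List Bool) :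
    frontTraceIter k (passImage X) = traceSubst (frontTraceIter k X) := by
  induction k generalizing X with
  | zero => rfl
  | succ k ih => simp [frontTraceIter, ih, frontTrace_passImage, traceSubst]

lemma frontTraceIter_succ (k : ℕ) (X : List Bool) :
    frontTraceIter (k + 1) X = frontTrace X ++ traceSubst (frontTraceIter k X) := by
  rw [frontTraceIter, frontTraceIter_passImage]

lemma le_length_frontTraceIter {X : List Bool} (hX : X ≠ []) (k : ℕ) :
    k ≤ (frontTraceIter k X).length := by
  induction k with
  | zero => exact Nat.zero_le _
  | succ k ih =>
    have h1 := length_traceSubst_add_count_false (frontTraceIter k X)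
    have h2 := (frontTraceIter k X).count_le_length (a := false)
    have h3 : 0 < X.length := length_pos_iff.mpr hX
    rw [frontTraceIter_succ, length_append, length_frontTrace]
    omega

lemma count_true_wupdate_iterate (k : ℕ) (X : List Bool) {t : ℕ}
    (ht : t ≤ (frontTraceIter k X).length) :
    (wupdate^[t] X).count true = X.count true + ((frontTraceIter k X).take t).count false := by
  induction k generalizing X t with
  | zero => simp_all [frontTraceIter]
  | succ k ih =>
    rw [frontTraceIter] at ht ⊢
    rcases le_or_gt t (frontTrace X).length with h | h
    · simpa [take_append_of_le_length h] using count_true_wupdate_iterate_append X [] h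
    · obtain ⟨t, rfl⟩ := Nat.exists_eq_add_of_le h.le
      rw [length_append, Nat.add_le_add_iff_left] at ht
      have hpass : wupdate^[(frontTrace X).length] X = passImage X := by
        simpa using wupdate_iterate_length_frontTrace X []
      have hiter : wupdate^[(frontTrace X).length + t] X = wupdate^[t] (passImage X) := by
        rw [add_comm, iterate_add_apply, hpass]
      rw [hiter, ih _ ht, take_length_add_append, count_append,
        count_true_passImage, count_false_frontTrace, ← count_true_add_count_false, add_assoc]

def wythoffOnes (S : List Bool) (t : ℕ) : ℕ := (wupdate^[t] S).count true

lemma count_true_le_count_true_wupdate (X : List Bool) :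
    X.count true ≤ (wupdate X).count true := by
  rcases X with _ | ⟨_ | _, X⟩ <;> simp [wupdate]

lemma count_true_wupdate_le (X : List Bool) :
    (wupdate X).count true ≤ X.count true + 1 := by
  rcases X with _ | ⟨_ | _, X⟩ <;> simp [wupdate]

lemma count_true_wupdate_wupdate_le (X : List Bool) :
    (wupdate (wupdate X)).count true ≤ X.count true + 1 := by
  rcases X with _ | ⟨_ | _, X⟩
  · simp [wupdate]
  · simp [wupdate]
  · simpa [wupdate] using count_true_wupdate_le (X ++ [false, true])

lemma wythoffOnes_monotone (S : List Bool) : Monotone (wythoffOnes S) :=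
  monotone_nat_of_le_succ fun t => by
    simpa only [wythoffOnes, iterate_succ_apply'] using count_true_le_count_true_wupdate _

lemma wythoffOnes_add_two_le (S : List Bool) (t : ℕ) :
    wythoffOnes S (t + 2) ≤ wythoffOnes S t + 1 := by
  simpa only [wythoffOnes, iterate_succ_apply'] using count_true_wupdate_wupdate_le _

lemma exists_flatMap_eq_append_true {f : Bool → List Bool} (hf : ∀ b, ∃ B, f b = B ++ [true])
    {X : List Bool} (hX : X ≠ []) : ∃ B, X.flatMap f = B ++ [true] := by
  obtain ⟨X, b, rfl⟩ := (eq_nil_or_concat X).resolve_left hX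
  obtain ⟨B, hB⟩ := hf b
  exact ⟨X.flatMap f ++ B, by simp [hB]⟩

lemma exists_frontTrace_append_traceSubst_eq_append_true {X : List Bool} (hX : X ≠ [])
    (Y : List Bool) : ∃ B, frontTrace X ++ traceSubst Y = B ++ [true] := by
  rcases eq_or_ne Y [] with rfl | hY
  · simpa [traceSubst, frontTrace] using
      exists_flatMap_eq_append_true (fun b => ⟨(frontBlock b).dropLast, by cases b <;> rfl⟩) hX
  · obtain ⟨B, hB⟩ := exists_flatMap_eq_append_true (f := traceBlock)
      (fun b => ⟨(traceBlock b).dropLast, by cases b <;> rfl⟩) hY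
    exact ⟨frontTrace X ++ B, by rw [traceSubst, hB, append_assoc]⟩

lemma wythoffOnes_selfSimilar {S : List Bool} (hS : S ≠ []) (t : ℕ) :
    wythoffOnes S (2 * S.length + 3 * t - wythoffOnes S t) = S.length + t ∧
      wythoffOnes S (2 * S.length + 3 * t - wythoffOnes S t - 1) = S.length + t := by
  set Y := frontTraceIter t S
  have hY : t ≤ Y.length := le_length_frontTraceIter hS t
  have hP : (Y.take t).length = t := length_take_of_le hY
  obtain ⟨B, hB⟩ := exists_frontTrace_append_traceSubst_eq_append_true hS (Y.take t)
  have htrace : frontTraceIter (t + 1) S = B ++ [true] ++ traceSubst (Y.drop t) := by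
    rw [frontTraceIter_succ, ← hB, append_assoc, ← traceSubst_append, take_append_drop]
  have hlen : (B ++ [true]).length + (Y.take t).count false =
      S.length + S.count false + 3 * t := by
    rw [← hB, length_append, length_frontTrace, add_assoc, length_traceSubst_add_count_false, hP]
  have hzeros : (B ++ [true]).count false = S.count false + t := by
    rw [← hB, count_append, count_false_frontTrace, count_false_traceSubst, hP]
  have hcount : wythoffOnes S t = S.count true + (Y.take t).count false :=
    count_true_wupdate_iterate t S hY
  have hones := S.count_true_add_count_false
  have harg : 2 * S.length + 3 * t - wythoffOnes S t = (B ++ [true]).length := by omega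
  have hB' : (B ++ [true]).length ≤ (frontTraceIter (t + 1) S).length := by simp [htrace]
  constructor
  · rw [harg, wythoffOnes, count_true_wupdate_iterate (t + 1) S hB', htrace, take_left, hzeros]
    omega
  · rw [harg, length_append, length_singleton, Nat.add_sub_cancel, wythoffOnes,
      count_true_wupdate_iterate (t + 1) S ((by simp : B.length ≤ _).trans hB'), htrace, append_assoc,
      take_left]
    rw [count_append, show [true].count false = 0 from rfl, add_zero] at hzeros
    omega

lemma isSelfSimilarCount_wythoffOnes {S : List Bool} (hS : S ≠ []) :
    IsSelfSimilarCount (wythoffOnes S) S.length :=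
  ⟨wythoffOnes_monotone S, wythoffOnes_add_two_le S, wythoffOnes_selfSimilar hS⟩

lemma wythoffOnes_syncTime {S : List Bool} (hS : S ≠ []) :
    wythoffOnes S (syncTime S.length S.length) = syncCount S.length S.length :=
  (isSelfSimilarCount_wythoffOnes hS).eq_syncCount count_le_length

lemma length_wupdate {X : List Bool} (hX : X ≠ []) : (wupdate X).length = X.length + 1 := by
  rcases X with _ | ⟨_ | _, X⟩
  · contradiction
  all_goals simp [wupdate]

lemma length_wupdate_iterate {S : List Bool} (hS : S ≠ []) (t : ℕ) :
    (wupdate^[t] S).length = S.length + t := by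
  induction t with
  | zero => rfl
  | succ t ih =>
    have hne : wupdate^[t] S ≠ [] :=
      ne_nil_of_length_pos (by rw [ih]; exact Nat.add_pos_left (length_pos_iff.mpr hS) t)
    rw [iterate_succ_apply', length_wupdate hne, ih, add_assoc]

/-- Starting from two arbitrary bitstrings of the same length and repeatedly
applying the Wythoff update to both, there is a time at which the two strings
become balanced. -/
theorem eventually_balanced (S T : List Bool) (hlen : S.length = T.length) :
    ∃ t : ℕ, BalancedBits (wupdate^[t] S) (wupdate^[t] T) := by
  rcases eq_or_ne S [] with rfl | hS
  · obtain rfl : T = [] := length_eq_zero_iff.mp hlen.symm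
    exact ⟨0, rfl, rfl⟩
  have hT : T ≠ [] := ne_nil_of_length_pos (hlen ▸ length_pos_iff.mpr hS)
  refine ⟨syncTime S.length S.length, ?_, ?_⟩
  · rw [length_wupdate_iterate hS, length_wupdate_iterate hT, hlen]
  · change wythoffOnes S _ = wythoffOnes T _
    rw [wythoffOnes_syncTime hS, hlen, wythoffOnes_syncTime hT]
end

section
/- Let S be a bitstring and let S′ be any prefix of w(S) that does not end in a 0 (the empty prefix included). Then there exists a prefix σ of S satisfying w(σ) = S′; in particular, if S′ is the empty prefix then σ is the empty prefix. -/
/-! Each block `001`, `01` of `w` contains exactly one `1`, at its end. Hence a prefix of `w(S)`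
that is empty or ends in `1` stops at a block boundary, and is therefore the image of the
prefix of `S` made of the blocks it covers. -/

/-- The substitution `w`, simultaneously replacing each `0` by `001` and each
`1` by `01`. -/
def wsub (S : List Bool) : List Bool :=
  S.flatMap (fun b => if b then [false, true] else [false, false, true])

namespace List

variable {α β : Type*}

theorem exists_prefix_flatMap_eq {f : α → List β} {p : β → Prop}
    (hf : ∀ a, ∃ u c, f a = u ++ [c] ∧ p c ∧ ∀ x ∈ u, ¬ p x) :
    ∀ {S : List α} {T : List β}, T <+: S.flatMap f → (∀ c ∈ T.getLast?, p c) →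
      ∃ σ, σ <+: S ∧ σ.flatMap f = T
  | [], T, hT, _ => ⟨[], nil_prefix, by simpa using (prefix_nil.mp hT).symm⟩
  | a :: S, T, hT, hlast => by
    rw [flatMap_cons] at hT
    rcases prefix_or_prefix_of_prefix hT (prefix_append (f a) (S.flatMap f)) with hTa | ⟨t, rfl⟩
    · obtain ⟨u, c, hfa, -, hu⟩ := hf a
      rw [hfa, prefix_concat_iff] at hTa
      rcases hTa with hTa | hTu
      · exact ⟨[a], by simp, by simp [hfa, hTa]⟩
      · rcases eq_nil_or_concat' T with rfl | ⟨T', d, rfl⟩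
        · exact ⟨[], nil_prefix, rfl⟩
        · exact absurd (hlast d (by simp)) (hu d (hTu.subset (by simp)))
    · have ht : t <+: S.flatMap f := (prefix_append_right_inj (f a)).mp hT
      have htlast : ∀ c ∈ t.getLast?, p c := by
        intro c hc
        exact hlast c (by rw [getLast?_append, Option.mem_def, hc]; rfl)
      obtain ⟨σ, hσ, rfl⟩ := exists_prefix_flatMap_eq hf ht htlast
      exact ⟨a :: σ, cons_prefix_cons.mpr ⟨rfl, hσ⟩, flatMap_cons⟩

end List

theorem wsub_eq_nil_iff {σ : List Bool} : wsub σ = [] ↔ σ = [] := by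
  cases σ with
  | nil => simp [wsub]
  | cons b σ => cases b <;> simp [wsub]

/-- For any prefix `S'` of `w(S)` not ending in a zero, there is a prefix `σ`
of `S` with `w(σ) = S'`; in particular if `S'` is empty then so is `σ`. -/
theorem prefix_of_wsub (S S' : List Bool)
    (hpre : S' <+: wsub S) (hend : S'.getLast? ≠ some false) :
    ∃ σ : List Bool, σ <+: S ∧ wsub σ = S' ∧ (S' = [] → σ = []) := by
  have hblocks : ∀ b : Bool, ∃ u c,
      (if b then [false, true] else [false, false, true]) = u ++ [c] ∧ c = true ∧
        ∀ x ∈ u, ¬ x = true := by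
    intro b
    cases b
    · exact ⟨[false, false], true, rfl, rfl, by simp⟩
    · exact ⟨[false], true, rfl, rfl, by simp⟩
  have hlast : ∀ c ∈ S'.getLast?, c = true := by
    intro c hc
    cases c
    · exact absurd hc hend
    · rfl
  obtain ⟨σ, hσ, hwσ⟩ := List.exists_prefix_flatMap_eq hblocks hpre hlast
  exact ⟨σ, hσ, hwσ, fun h => wsub_eq_nil_iff.mp (hwσ.trans h)⟩
end

section
/- For any nonempty bitstring S, applying the Wythoff update 2·0_S + 1_S times to S yields exactly w(S), where 0_S and 1_S are the number of zeros and ones of S respectively. -/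
/-! The update acts as a queue: a leading `1` is replaced by `01` at the back in one step, and a
leading `0` by `001` at the back in two steps (it first becomes a `1`). Hence a prefix `S` is
consumed after `2·0_S + 1_S` steps, leaving `w(S)` behind whatever followed it. -/

lemma wupdate_iterate_one_true_cons (L : List Bool) :
    wupdate^[1] (true :: L) = L ++ [false, true] := rfl

lemma wupdate_iterate_two_false_cons (L : List Bool) :
    wupdate^[2] (false :: L) = L ++ [false, false, true] := by
  simp [wupdate]

lemma wupdate_iterate_append (S T : List Bool) :
    wupdate^[2 * S.count false + S.count true] (S ++ T) = T ++ wsub S := by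
  induction S generalizing T with
  | nil => simp [wsub]
  | cons b S ih =>
    cases b with
    | false =>
      have hsteps : 2 * (false :: S).count false + (false :: S).count true
          = (2 * S.count false + S.count true) + 2 := by
        rw [List.count_cons_self, List.count_cons_of_ne (by decide : false ≠ true)]; ring
      rw [hsteps, Function.iterate_add_apply, List.cons_append,
        wupdate_iterate_two_false_cons, List.append_assoc, ih]
      simp [wsub]
    | true =>
      have hsteps : 2 * (true :: S).count false + (true :: S).count true
          = (2 * S.count false + S.count true) + 1 := by
        rw [List.count_cons_self, List.count_cons_of_ne (by decide : true ≠ false)]; ring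
      rw [hsteps, Function.iterate_add_apply, List.cons_append,
        wupdate_iterate_one_true_cons, List.append_assoc, ih]
      simp [wsub]

theorem wupdate_iterate_eq_wsub_general (S : List Bool) :
    wupdate^[2 * S.count false + S.count true] S = wsub S := by
  simpa using wupdate_iterate_append S []

/-- Applying the Wythoff update `2·0_S + 1_S` times to a nonempty bitstring `S`
yields exactly `w(S)`. -/
theorem wupdate_iterate_eq_wsub (S : List Bool) (hS : S ≠ []) :
    wupdate^[2 * S.count false + S.count true] S = wsub S :=
  wupdate_iterate_eq_wsub_general S
end

section
/- Let S and T be balanced bitstrings. If the unit of area (x,y) is between S and T, then the unit of area (2x+y+1, x+y) is between w(S) and w(T). -/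
/-- `(x, y)` is below `S` if some prefix of `S` has at most `x` zeros and at
least `y + 1` ones. -/
def Below (S : List Bool) (x y : ℤ) : Prop :=
  ∃ n ≤ S.length, ((S.take n).count false : ℤ) ≤ x ∧ y + 1 ≤ ((S.take n).count true : ℤ)

/-- `(x, y)` is above `S` if some prefix of `S` has at most `y` ones and at
least `x + 1` zeros. -/
def Above (S : List Bool) (x y : ℤ) : Prop :=
  ∃ n ≤ S.length, ((S.take n).count true : ℤ) ≤ y ∧ x + 1 ≤ ((S.take n).count false : ℤ)

/-- `(x, y)` is between `S` and `T` if it is above one and below the other. -/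
def Between (S T : List Bool) (x y : ℤ) : Prop :=
  (Above S x y ∧ Below T x y) ∨ (Below S x y ∧ Above T x y)

/-!
For `x y : ℕ` and `m = x + y + 1`, `Above S x y` and `Below S x y` only depend on the prefix
`P` of `S` of length `m`: the first says that `P` has at least `x + 1` zeros, the second
that it has at least `y + 1` ones. Balancedness guarantees `|S| = |T| ≥ m`. The word `w(P)`
has `m` ones, `m + #zeros(P)` zeros and ends with a one, so `w(P)` without its last letter
witnesses `Above (w S)`, and `w(P)` itself witnesses `Below (w T)`, for `(2x + y + 1, x + y)`.
-/

theorem BalancedBits.symm {S T : List Bool} (h : BalancedBits S T) : BalancedBits T S :=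
  ⟨h.1.symm, h.2.symm⟩

section Prefix

variable {S L : List Bool} {x y : ℤ}

theorem Above.nonneg (h : Above S x y) : 0 ≤ y := by
  obtain ⟨n, -, hy, -⟩ := h
  omega

theorem Below.nonneg (h : Below S x y) : 0 ≤ x := by
  obtain ⟨n, -, hx, -⟩ := h
  omega

theorem above_of_isPrefix (hL : L <+: S) (hy : (L.count true : ℤ) ≤ y)
    (hx : x + 1 ≤ (L.count false : ℤ)) : Above S x y :=
  ⟨L.length, hL.length_le, by rwa [← List.prefix_iff_eq_take.mp hL],
    by rwa [← List.prefix_iff_eq_take.mp hL]⟩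

theorem below_of_isPrefix (hL : L <+: S) (hx : (L.count false : ℤ) ≤ x)
    (hy : y + 1 ≤ (L.count true : ℤ)) : Below S x y :=
  ⟨L.length, hL.length_le, by rwa [← List.prefix_iff_eq_take.mp hL],
    by rwa [← List.prefix_iff_eq_take.mp hL]⟩

end Prefix

theorem le_count_take_of_count_not_le {L : List Bool} {b : Bool} {k j m : ℕ}
    (hnot : L.count (!b) ≤ j) (hb : k ≤ L.count b) (hm : k + j ≤ m) :
    k ≤ (L.take m).count b := by
  rcases le_or_gt L.length m with hlen | hlen
  · rwa [List.take_of_length_le hlen]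
  · have hsum := List.count_add_count_not (L.take m) b
    have hnot' := (List.take_prefix m L).count_le (!b)
    rw [List.length_take_of_le hlen.le] at hsum
    omega

section TakeCharacterization

variable {S : List Bool} {x y : ℕ}

theorem Above.le_count_false_take (h : Above S x y) :
    x + 1 ≤ (S.take (x + y + 1)).count false := by
  obtain ⟨n, -, hy, hx⟩ := h
  calc x + 1 ≤ ((S.take n).take (x + y + 1)).count false :=
        le_count_take_of_count_not_le (b := false) (by exact_mod_cast hy)
          (by exact_mod_cast hx) (by omega)
    _ ≤ (S.take (x + y + 1)).count false :=
        ((List.take_prefix n S).take _).count_le false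

theorem Below.le_count_true_take (h : Below S x y) :
    y + 1 ≤ (S.take (x + y + 1)).count true := by
  obtain ⟨n, -, hx, hy⟩ := h
  calc y + 1 ≤ ((S.take n).take (x + y + 1)).count true :=
        le_count_take_of_count_not_le (b := true) (by exact_mod_cast hx)
          (by exact_mod_cast hy) (by omega)
    _ ≤ (S.take (x + y + 1)).count true :=
        ((List.take_prefix n S).take _).count_le true

end TakeCharacterization

theorem List.IsPrefix.wsub {P S : List Bool} (h : P <+: S) : wsub P <+: wsub S :=
  h.flatMap _

theorem count_true_wsub (P : List Bool) : (wsub P).count true = P.length := by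
  induction P with
  | nil => rfl
  | cons b P ih => cases b <;> simp [wsub] at ih ⊢ <;> omega

theorem count_false_wsub (P : List Bool) :
    (wsub P).count false = P.length + P.count false := by
  induction P with
  | nil => rfl
  | cons b P ih => cases b <;> simp [wsub] at ih ⊢ <;> omega

theorem exists_wsub_eq_append_true {P : List Bool} (hP : P ≠ []) :
    ∃ R, wsub P = R ++ [true] := by
  obtain ⟨Q, b, rfl⟩ := (List.eq_nil_or_concat P).resolve_left hP
  cases b
  · exact ⟨wsub Q ++ [false, false], by simp [wsub]⟩
  · exact ⟨wsub Q ++ [false], by simp [wsub]⟩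

section WsubOfTake

variable {S : List Bool} {x y : ℕ}

theorem above_wsub_of_le_count_false_take (hlen : x + y + 1 ≤ S.length)
    (h : x + 1 ≤ (S.take (x + y + 1)).count false) :
    Above (wsub S) (2 * x + y + 1) (x + y) := by
  set P := S.take (x + y + 1)
  have hPlen : P.length = x + y + 1 := List.length_take_of_le hlen
  obtain ⟨R, hR⟩ := exists_wsub_eq_append_true (P := P) (List.ne_nil_of_length_pos (by omega))
  have hRS : R <+: wsub S :=
    (List.prefix_append R [true]).trans (hR ▸ (List.take_prefix _ S).wsub)
  have htrue : R.count true + 1 = P.length := by simpa [hR] using count_true_wsub P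
  have hfalse : R.count false = P.length + P.count false := by
    simpa [hR] using count_false_wsub P
  exact above_of_isPrefix hRS (by omega) (by omega)

theorem below_wsub_of_le_count_true_take (hlen : x + y + 1 ≤ S.length)
    (h : y + 1 ≤ (S.take (x + y + 1)).count true) :
    Below (wsub S) (2 * x + y + 1) (x + y) := by
  set P := S.take (x + y + 1)
  have hPlen : P.length = x + y + 1 := List.length_take_of_le hlen
  have hsum := List.count_false_add_count_true P
  have htrue := count_true_wsub P
  have hfalse := count_false_wsub P
  have hPS : wsub P <+: wsub S := (List.take_prefix _ S).wsub
  refine below_of_isPrefix hPS ?_ ?_ <;> omega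

end WsubOfTake

theorem above_wsub_and_below_wsub {S T : List Bool} {x y : ℕ} (hbal : BalancedBits S T)
    (hA : Above S x y) (hB : Below T x y) :
    Above (wsub S) (2 * x + y + 1) (x + y) ∧ Below (wsub T) (2 * x + y + 1) (x + y) := by
  have hzeros := hA.le_count_false_take.trans ((List.take_prefix _ S).count_le false)
  have hones := hB.le_count_true_take.trans ((List.take_prefix _ T).count_le true)
  have hlen : x + y + 1 ≤ S.length := by
    have := List.count_false_add_count_true S
    have := hbal.2
    omega
  exact ⟨above_wsub_of_le_count_false_take hlen hA.le_count_false_take,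
    below_wsub_of_le_count_true_take (hbal.1 ▸ hlen) hB.le_count_true_take⟩

/-- If `(x, y)` is between balanced bitstrings `S` and `T`, then
`(2x + y + 1, x + y)` is between `w(S)` and `w(T)`. -/
theorem between_wsub_of_between (S T : List Bool) (hbal : BalancedBits S T)
    (x y : ℤ) (h : Between S T x y) :
    Between (wsub S) (wsub T) (2 * x + y + 1) (x + y) := by
  have hx : 0 ≤ x := by rcases h with ⟨-, hB⟩ | ⟨hB, -⟩ <;> exact hB.nonneg
  have hy : 0 ≤ y := by rcases h with ⟨hA, -⟩ | ⟨-, hA⟩ <;> exact hA.nonneg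
  lift x to ℕ using hx
  lift y to ℕ using hy
  rcases h with ⟨hA, hB⟩ | ⟨hB, hA⟩
  · exact Or.inl (above_wsub_and_below_wsub hbal hA hB)
  · exact Or.inr (above_wsub_and_below_wsub hbal.symm hA hB).symm
end

section
/- Let S and T be balanced bitstrings. Then the following are equivalent: (i) for all units of area (x,y) and (x′,y′) between S and T, if (x,y) ≠ (x′,y′) then x ≠ x′ and y ≠ y′; (ii) S and T differ by defects. Moreover, if S and T differ by defects, then the number of defects equals the area between S and T. -/
/-- A defect of balanced bitstrings `S` and `T` (1-indexed) is an index
`1 ≤ i ≤ |S| − 1` such that the length-`(i−1)` prefixes are balanced,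
`S[i] ≠ T[i]`, `S[i] ≠ S[i+1]`, and `S[i+1] ≠ T[i+1]`. -/
def IsDefect (S T : List Bool) (i : ℕ) : Prop :=
  1 ≤ i ∧ i + 1 ≤ S.length ∧
  BalancedBits (S.take (i - 1)) (T.take (i - 1)) ∧
  S.getD (i - 1) false ≠ T.getD (i - 1) false ∧
  S.getD (i - 1) false ≠ S.getD i false ∧
  S.getD i false ≠ T.getD i false

/-- `S` and `T` differ by defects if they are balanced and every index where
they differ is part of a defect. -/
def DifferByDefects (S T : List Bool) : Prop :=
  BalancedBits S T ∧
  ∀ i, 1 ≤ i → i ≤ S.length → S.getD (i - 1) false ≠ T.getD (i - 1) false →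
    IsDefect S T (i - 1) ∨ IsDefect S T i

/-! Read a bitstring as a lattice path (a `0` steps right, a `1` steps up) and let `gap S T n` be
the difference of the numbers of ones in the length-`n` prefixes. The units between the two paths
on the antidiagonal `x + y + 1 = n` are those whose `y` lies between the two ones-counts, so there
are `|gap S T n|` of them. Differing by defects says exactly that no two consecutive gaps are
nonzero. Then every nonzero gap is `±1` and marks one defect and one unit, and these units move
strictly up and to the right as `n` grows. Conversely, two consecutive nonzero gaps produce two
units in a common row or column. -/

namespace BitPath

def ones (P : List Bool) (n : ℕ) : ℤ := (P.take n).count true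

lemma ones_zero (P : List Bool) : ones P 0 = 0 := by simp [ones]

lemma ones_succ (P : List Bool) (n : ℕ) :
    ones P (n + 1) = ones P n + (P.getD n false).toNat := by
  rw [ones, ones, List.take_add_one, List.count_append, List.getD_eq_getElem?_getD]
  cases P[n]? with
  | none => simp
  | some b => cases b <;> simp

lemma ones_nonneg (P : List Bool) (n : ℕ) : 0 ≤ ones P n := Int.natCast_nonneg _

lemma ones_length (P : List Bool) : ones P P.length = P.count true := by
  rw [ones, List.take_length]

lemma ones_le_ones_add (P : List Bool) (m n : ℕ) :
    ones P n ≤ ones P m + max ((n : ℤ) - m) 0 := by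
  suffices h : ∀ a k, ones P a ≤ ones P (a + k) ∧ ones P (a + k) ≤ ones P a + k by
    rcases le_total m n with hmn | hnm
    · obtain ⟨k, rfl⟩ := Nat.exists_eq_add_of_le hmn
      have := (h m k).2
      push_cast
      omega
    · obtain ⟨k, rfl⟩ := Nat.exists_eq_add_of_le hnm
      have := (h n k).1
      omega
  intro m k
  induction k with
  | zero => simp
  | succ k ih =>
    rw [← add_assoc, ones_succ]
    have := Bool.toNat_le (P.getD (m + k) false)
    push_cast
    omega

lemma count_false_take (P : List Bool) {n : ℕ} (h : n ≤ P.length) :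
    ((P.take n).count false : ℤ) = n - ones P n := by
  have := List.count_add_count_not (P.take n) true
  rw [List.length_take_of_le h] at this
  simp only [ones, Bool.not_true] at *
  omega

def gap (S T : List Bool) (n : ℕ) : ℤ := ones S n - ones T n

lemma gap_zero (S T : List Bool) : gap S T 0 = 0 := by simp [gap, ones_zero]

lemma gap_succ (S T : List Bool) (n : ℕ) :
    gap S T (n + 1) = gap S T n + (S.getD n false).toNat - (T.getD n false).toNat := by
  rw [gap, gap, ones_succ, ones_succ]
  ring

lemma getD_ne_iff_gap_succ_ne (S T : List Bool) (n : ℕ) :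
    S.getD n false ≠ T.getD n false ↔ gap S T (n + 1) ≠ gap S T n := by
  rw [gap_succ]
  cases S.getD n false <;> cases T.getD n false <;> simp

variable {S T : List Bool}

lemma balancedBits_take_iff (hlen : S.length = T.length) (n : ℕ) :
    BalancedBits (S.take n) (T.take n) ↔ gap S T n = 0 := by
  simp only [BalancedBits, List.length_take, hlen, gap, ones, true_and]
  omega

lemma gap_of_length_le (hbal : BalancedBits S T) {n : ℕ} (h : S.length ≤ n) :
    gap S T n = 0 := by
  rw [gap, ones, ones, List.take_of_length_le h, List.take_of_length_le (hbal.1 ▸ h), hbal.2]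
  ring

lemma lt_length_of_gap_ne_zero (hbal : BalancedBits S T) {n : ℕ}
    (h : gap S T n ≠ 0) : 0 < n ∧ n < S.length := by
  refine ⟨Nat.pos_of_ne_zero ?_, lt_of_not_ge fun hn => h (gap_of_length_le hbal hn)⟩
  rintro rfl
  exact h (gap_zero S T)

lemma isDefect_iff (hbal : BalancedBits S T) (i : ℕ) :
    IsDefect S T i ↔ gap S T (i - 1) = 0 ∧ gap S T i ≠ 0 ∧ gap S T (i + 1) = 0 := by
  rcases i with _ | j
  · simp [IsDefect, gap_zero]
  have hlt := (lt_length_of_gap_ne_zero hbal (n := j + 1)).mt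
  have h1 := gap_succ S T j
  have h2 := gap_succ S T (j + 1)
  simp only [IsDefect, Nat.add_sub_cancel, balancedBits_take_iff hbal.1] at *
  generalize S.getD j false = a, T.getD j false = b, S.getD (j + 1) false = c,
    T.getD (j + 1) false = d at *
  cases a <;> cases b <;> cases c <;> cases d <;> simp at * <;> omega

def IsolatedGaps (S T : List Bool) : Prop := ∀ n, gap S T n = 0 ∨ gap S T (n + 1) = 0

lemma IsolatedGaps.gap_pred_eq_zero (h : IsolatedGaps S T) {n : ℕ} (hn : gap S T n ≠ 0) :
    gap S T (n - 1) = 0 := by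
  rcases n with _ | n
  · exact gap_zero S T
  · exact (h n).resolve_right hn

lemma IsolatedGaps.gap_succ_eq_zero (h : IsolatedGaps S T) {n : ℕ} (hn : gap S T n ≠ 0) :
    gap S T (n + 1) = 0 :=
  (h n).resolve_left hn

lemma differByDefects_iff_isolatedGaps (hbal : BalancedBits S T) :
    DifferByDefects S T ↔ IsolatedGaps S T := by
  constructor
  · rintro ⟨-, hdef⟩ n
    induction n with
    | zero => exact .inl (gap_zero S T)
    | succ n ih =>
      refine or_iff_not_imp_left.2 fun hn => ?_
      have hlt := (lt_length_of_gap_ne_zero hbal hn).2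
      have hdiff := (getD_ne_iff_gap_succ_ne S T n).2 (by rwa [ih.resolve_right hn])
      rcases hdef (n + 1) (by omega) hlt.le hdiff with h | h
      · exact absurd ((isDefect_iff hbal _).1 h).2.2 hn
      · exact ((isDefect_iff hbal _).1 h).2.2
  · intro hiso
    refine ⟨hbal, fun i hi _ hdiff => ?_⟩
    obtain ⟨j, rfl⟩ := Nat.exists_eq_add_of_le' hi
    rw [Nat.add_sub_cancel, getD_ne_iff_gap_succ_ne] at hdiff
    by_cases hj : gap S T (j + 1) = 0
    · have hj' : gap S T j ≠ 0 := by rw [hj] at hdiff; exact Ne.symm hdiff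
      left
      rw [isDefect_iff hbal]
      exact ⟨hiso.gap_pred_eq_zero hj', hj', hj⟩
    · right
      rw [isDefect_iff hbal]
      exact ⟨hiso.gap_pred_eq_zero hj, hj, hiso.gap_succ_eq_zero hj⟩

lemma exists_diag_of_below_of_above (hbal : BalancedBits S T) {x y : ℤ}
    (hS : Below S x y) (hT : Above T x y) :
    ∃ c ≤ S.length, (c : ℤ) = x + y + 1 ∧ ones T c ≤ y ∧ y + 1 ≤ ones S c := by
  obtain ⟨n, hn, hzS, hoS⟩ := hS
  obtain ⟨m, hm, hoT, hzT⟩ := hT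
  have hx : 0 ≤ x := le_trans (Int.natCast_nonneg _) hzS
  rw [count_false_take S hn] at hzS
  rw [count_false_take T hm] at hzT
  change y + 1 ≤ ones S n at hoS
  change ones T m ≤ y at hoT
  obtain ⟨c, hc⟩ := Int.eq_ofNat_of_zero_le (a := x + y + 1) (by linarith [ones_nonneg T m])
  have hSn := ones_le_ones_add S c n
  have hSlen := ones_le_ones_add S S.length n
  have hTc := ones_le_ones_add T m c
  have hTlen := ones_le_ones_add T m T.length
  rw [ones_length] at hSlen hTlen
  have hlen : (S.length : ℤ) = T.length := by exact_mod_cast hbal.1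
  have hcount : (S.count true : ℤ) = T.count true := by exact_mod_cast hbal.2
  refine ⟨c, ?_, hc.symm, by omega, by omega⟩
  omega

lemma below_above_of_diag {c : ℕ} (hcS : c ≤ S.length) (hcT : c ≤ T.length) {x y : ℤ}
    (hc : (c : ℤ) = x + y + 1) (hT : ones T c ≤ y) (hS : y + 1 ≤ ones S c) :
    Below S x y ∧ Above T x y :=
  ⟨⟨c, hcS, by rw [count_false_take S hcS]; omega, hS⟩,
    ⟨c, hcT, hT, by rw [count_false_take T hcT]; omega⟩⟩

lemma between_iff (hbal : BalancedBits S T) (x y : ℤ) :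
    Between S T x y ↔ ∃ c ≤ S.length, (c : ℤ) = x + y + 1 ∧
      min (ones S c) (ones T c) ≤ y ∧ y + 1 ≤ max (ones S c) (ones T c) := by
  have hbal' : BalancedBits T S := ⟨hbal.1.symm, hbal.2.symm⟩
  constructor
  · rintro (⟨hA, hB⟩ | ⟨hB, hA⟩)
    · obtain ⟨c, hcT, hc, hS, hT⟩ := exists_diag_of_below_of_above hbal' hB hA
      exact ⟨c, hbal.1 ▸ hcT, hc, by omega, by omega⟩
    · obtain ⟨c, hcS, hc, hT, hS⟩ := exists_diag_of_below_of_above hbal hB hA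
      exact ⟨c, hcS, hc, by omega, by omega⟩
  · rintro ⟨c, hcS, hc, hmin, hmax⟩
    have hcT : c ≤ T.length := hbal.1 ▸ hcS
    rcases le_total (ones S c) (ones T c) with h | h
    · exact .inl (below_above_of_diag hcT hcS hc (by omega) (by omega)).symm
    · exact .inr (below_above_of_diag hcS hcT hc (by omega) (by omega))

lemma IsolatedGaps.abs_gap_eq_one (hiso : IsolatedGaps S T) {c : ℕ} (hc : gap S T c ≠ 0) :
    |gap S T c| = 1 := by
  have hpred := hiso.gap_pred_eq_zero hc
  rcases c with _ | b
  · exact absurd (gap_zero S T) hc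
  rw [Nat.add_sub_cancel] at hpred
  rw [gap_succ, hpred] at hc ⊢
  rw [abs_eq zero_le_one]
  have := Bool.toNat_le (S.getD b false)
  have := Bool.toNat_le (T.getD b false)
  omega

def diagUnit (S T : List Bool) (c : ℕ) : ℤ × ℤ :=
  ((c : ℤ) - 1 - min (ones S c) (ones T c), min (ones S c) (ones T c))

lemma setOf_between_eq_image (hbal : BalancedBits S T) (hiso : IsolatedGaps S T) :
    {p : ℤ × ℤ | Between S T p.1 p.2} = diagUnit S T '' {c | gap S T c ≠ 0} := by
  ext ⟨x, y⟩
  simp only [Set.mem_ofPred_eq, Set.mem_image, between_iff hbal, diagUnit, Prod.mk.injEq]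
  constructor
  · rintro ⟨c, -, hc, hmin, hmax⟩
    have hgap : gap S T c ≠ 0 := by rw [gap]; omega
    have := (abs_eq zero_le_one).mp (hiso.abs_gap_eq_one hgap)
    rw [gap] at this
    exact ⟨c, hgap, by omega, by omega⟩
  · rintro ⟨c, hgap, hx, hy⟩
    have := (abs_eq zero_le_one).mp (hiso.abs_gap_eq_one hgap)
    rw [gap] at this
    have hlt := lt_length_of_gap_ne_zero hbal hgap
    exact ⟨c, hlt.2.le, by omega, by omega, by omega⟩

lemma diagUnit_lt_diagUnit (hiso : IsolatedGaps S T) {c c' : ℕ} (hcc' : c < c')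
    (hc : gap S T c ≠ 0) (hc' : gap S T c' ≠ 0) :
    (diagUnit S T c).1 < (diagUnit S T c').1 ∧ (diagUnit S T c).2 < (diagUnit S T c').2 := by
  have hnext := hiso.gap_succ_eq_zero hc
  have hprev := hiso.gap_pred_eq_zero hc'
  have hc2 : c + 1 < c' := lt_of_le_of_ne hcc' fun h => hc' (h ▸ hnext)
  have h1 := (abs_eq zero_le_one).mp (hiso.abs_gap_eq_one hc)
  have h2 := (abs_eq zero_le_one).mp (hiso.abs_gap_eq_one hc')
  have := ones_le_ones_add S c (c + 1)
  have := ones_le_ones_add S (c + 1) c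
  have := ones_le_ones_add S (c + 1) (c' - 1)
  have := ones_le_ones_add S (c' - 1) (c + 1)
  have := ones_le_ones_add S (c' - 1) c'
  have := ones_le_ones_add S c' (c' - 1)
  have := ones_le_ones_add T c (c + 1)
  have := ones_le_ones_add T (c + 1) c
  have := ones_le_ones_add T (c' - 1) c'
  have := ones_le_ones_add T c' (c' - 1)
  simp only [diagUnit, gap] at *
  omega

lemma isolatedGaps_of_forall_between (hbal : BalancedBits S T)
    (h : ∀ x y x' y' : ℤ, Between S T x y → Between S T x' y' →
      (x, y) ≠ (x', y') → x ≠ x' ∧ y ≠ y') :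
    IsolatedGaps S T := by
  intro c
  by_contra! hgaps
  obtain ⟨hc, hc'⟩ := hgaps
  have hlt := (lt_length_of_gap_ne_zero hbal hc').2
  have between (d : ℕ) (hd : d ≤ c + 1) (y : ℤ)
      (hy : min (ones S d) (ones T d) ≤ y ∧ y + 1 ≤ max (ones S d) (ones T d)) :
      Between S T (d - 1 - y) y :=
    (between_iff hbal _ y).2 ⟨d, by omega, by ring, hy⟩
  have := ones_le_ones_add S c (c + 1)
  have := ones_le_ones_add S (c + 1) c
  have := ones_le_ones_add T c (c + 1)
  have := ones_le_ones_add T (c + 1) c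
  simp only [gap] at hc hc'
  set y := min (ones S (c + 1)) (ones T (c + 1))
  by_cases hrow : y + 1 ≤ max (ones S c) (ones T c)
  · -- the lowest unit on diagonal `c + 1` has a neighbour on diagonal `c` in the same row
    have := h _ _ _ _ (between c (by omega) y ⟨by omega, hrow⟩)
      (between (c + 1) le_rfl y ⟨le_rfl, by omega⟩) (by simp)
    exact this.2 rfl
  · -- otherwise it lies directly above the lowest unit on diagonal `c`
    have := h _ _ _ _ (between c (by omega) (y - 1) ⟨by omega, by omega⟩)
      (between (c + 1) le_rfl y ⟨le_rfl, by omega⟩) (by simp)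
    exact this.1 (by push_cast; ring)

lemma forall_between_of_isolatedGaps (hbal : BalancedBits S T) (hiso : IsolatedGaps S T) :
    ∀ x y x' y' : ℤ, Between S T x y → Between S T x' y' →
      (x, y) ≠ (x', y') → x ≠ x' ∧ y ≠ y' := by
  intro x y x' y' hxy hxy' hne
  have mem (a b : ℤ) (hab : Between S T a b) :
      (a, b) ∈ diagUnit S T '' {c | gap S T c ≠ 0} := by
    rw [← setOf_between_eq_image hbal hiso]
    exact hab
  obtain ⟨c, hc, hcxy⟩ := mem x y hxy
  obtain ⟨c', hc', hcxy'⟩ := mem x' y' hxy'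
  rcases lt_trichotomy c c' with h | rfl | h
  · have := diagUnit_lt_diagUnit hiso h hc hc'
    rw [hcxy, hcxy'] at this
    exact ⟨this.1.ne, this.2.ne⟩
  · exact absurd (hcxy.symm.trans hcxy') hne
  · have := diagUnit_lt_diagUnit hiso h hc' hc
    rw [hcxy, hcxy'] at this
    exact ⟨this.1.ne', this.2.ne'⟩

lemma ncard_isDefect_eq_ncard_between (hbal : BalancedBits S T) (hiso : IsolatedGaps S T) :
    {i : ℕ | IsDefect S T i}.ncard = {p : ℤ × ℤ | Between S T p.1 p.2}.ncard := by
  have hdefects : {i : ℕ | IsDefect S T i} = {c | gap S T c ≠ 0} := by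
    ext i
    simp only [Set.mem_ofPred_eq, isDefect_iff hbal]
    exact ⟨fun h => h.2.1, fun h => ⟨hiso.gap_pred_eq_zero h, h, hiso.gap_succ_eq_zero h⟩⟩
  rw [hdefects, setOf_between_eq_image hbal hiso, Set.InjOn.ncard_image]
  intro c hc c' hc' h
  by_contra hne
  rcases Nat.lt_or_gt_of_ne hne with hlt | hlt
  · exact (diagUnit_lt_diagUnit hiso hlt hc hc').2.ne (congrArg Prod.snd h)
  · exact (diagUnit_lt_diagUnit hiso hlt hc' hc).2.ne (congrArg Prod.snd h).symm

end BitPath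

/-- For balanced `S` and `T`: no two distinct units of area between `S` and `T`
share a coordinate iff `S` and `T` differ by defects; and if they differ by
defects, the number of defects equals the area between `S` and `T`. -/
theorem differ_by_defects_iff (S T : List Bool) (hbal : BalancedBits S T) :
    ((∀ x y x' y' : ℤ, Between S T x y → Between S T x' y' →
        (x, y) ≠ (x', y') → x ≠ x' ∧ y ≠ y') ↔ DifferByDefects S T) ∧
    (DifferByDefects S T →
      {i : ℕ | IsDefect S T i}.ncard = {p : ℤ × ℤ | Between S T p.1 p.2}.ncard) := by
  rw [BitPath.differByDefects_iff_isolatedGaps hbal]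
  exact ⟨⟨BitPath.isolatedGaps_of_forall_between hbal,
      BitPath.forall_between_of_isolatedGaps hbal⟩,
    BitPath.ncard_isDefect_eq_ncard_between hbal⟩
end

section
/- Let g : ℤ² → ℤ² be defined by g(x,y) = (x−y−1, 2y−x+1), and let F_i denote the i-th Fibonacci number with F_1 = F_2 = 1. Then for every positive integer n, g^n(x,y) = (F_{2n−1}·x − F_{2n}·y − F_{2n}, −F_{2n}·x + F_{2n+1}·y + F_{2n+1} − 1). -/
/-- The map `g(x, y) = (x − y − 1, 2y − x + 1)`. -/
def g (p : ℤ × ℤ) : ℤ × ℤ := (p.1 - p.2 - 1, 2 * p.2 - p.1 + 1)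

/-!
In the coordinates `(x, y + 1)` the affine map `g` becomes the linear map `gLinear` with matrix
`[[1, -1], [-1, 2]]`, which is `[[0, 1], [1, 1]]²` up to signs. Its powers therefore advance the
Fibonacci numbers two steps at a time, as an induction with `F_{k+2} = F_k + F_{k+1}` confirms.
-/

def gLinear (p : ℤ × ℤ) : ℤ × ℤ := (p.1 - p.2, 2 * p.2 - p.1)

theorem semiconj_g_gLinear : Function.Semiconj (fun p : ℤ × ℤ => (p.1, p.2 + 1)) g gLinear :=
  fun p => by simp only [g, gLinear, Prod.mk.injEq]; constructor <;> ring

theorem gLinear_iterate_succ (n : ℕ) (x z : ℤ) :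
    gLinear^[n + 1] (x, z) =
      ((Nat.fib (2 * n + 1) : ℤ) * x - Nat.fib (2 * n + 2) * z,
       -(Nat.fib (2 * n + 2) : ℤ) * x + Nat.fib (2 * n + 3) * z) := by
  induction n with
  | zero =>
    simp only [zero_add, Function.iterate_one, gLinear, Prod.mk.injEq]
    norm_num [Nat.fib_add_two]
    ring
  | succ n ih =>
    rw [Function.iterate_succ_apply', ih]
    simp only [gLinear, show 2 * (n + 1) = 2 * n + 2 by ring, Prod.mk.injEq]
    push_cast [Nat.fib_add_two]
    constructor <;> ring

/-- For every positive integer `n`,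
`g^n(x, y) = (F_{2n−1}·x − F_{2n}·y − F_{2n}, −F_{2n}·x + F_{2n+1}·y + F_{2n+1} − 1)`,
where `F` denotes the Fibonacci numbers with `F_1 = F_2 = 1`. -/
theorem g_iterate_fib (n : ℕ) (hn : 0 < n) (x y : ℤ) :
    g^[n] (x, y) =
      ((Nat.fib (2 * n - 1) : ℤ) * x - (Nat.fib (2 * n) : ℤ) * y - (Nat.fib (2 * n) : ℤ),
       -(Nat.fib (2 * n) : ℤ) * x + (Nat.fib (2 * n + 1) : ℤ) * y +
         (Nat.fib (2 * n + 1) : ℤ) - 1) := by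
  obtain ⟨m, rfl⟩ : ∃ m, n = m + 1 := ⟨n - 1, by omega⟩
  have h := semiconj_g_gLinear.iterate_right (m + 1) (x, y)
  rw [gLinear_iterate_succ] at h
  simp only [Prod.ext_iff] at h
  rw [show 2 * (m + 1) - 1 = 2 * m + 1 by omega, show 2 * (m + 1) = 2 * m + 2 by ring,
    Prod.ext_iff]
  exact ⟨by linear_combination h.1, by linear_combination h.2⟩
end

section
/- Let S and T be balanced bitstrings and let n = |S| + 1. Then w^n(S) and w^n(T) differ by defects. -/
/-!
Let `d(i)` be the number of ones in the length-`i` prefix of `S` minus that of `T`. Every block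
of `w` ends in its only one, so the `k`-th one of `w(S)` sits at position
`3k - (number of ones among the first k letters of S)`, and consecutive ones of `w(S)` are at
least two apart. Comparing these positions for `S` and `T` shows that one application of `w`
lowers `max |d|` by one as long as it is at least two, so after `|S|` steps `|d| ≤ 1`. From then
on the `k`-th ones of `w(S)` and `w(T)` are at most one position apart, so the `d` of the next
images vanishes at one of any two consecutive positions, and an isolated nonzero value of `d`
is exactly a defect.
-/

section Prefix

variable (S : List Bool)

def prefixOnes (i : ℕ) : ℕ := (S.take i).count true

lemma prefixOnes_zero : prefixOnes S 0 = 0 := by simp [prefixOnes]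

lemma prefixOnes_add (i d : ℕ) :
    prefixOnes S (i + d) = prefixOnes S i + ((S.drop i).take d).count true := by
  simp [prefixOnes, List.take_add, List.count_append]

lemma prefixOnes_add_le (i d : ℕ) : prefixOnes S (i + d) ≤ prefixOnes S i + d := by
  rw [prefixOnes_add]
  exact Nat.add_le_add_left (List.count_le_length.trans (List.length_take_le _ _)) _

lemma prefixOnes_le_count (i : ℕ) : prefixOnes S i ≤ S.count true :=
  (List.take_sublist i S).count_le _

lemma prefixOnes_of_length_le {i : ℕ} (h : S.length ≤ i) : prefixOnes S i = S.count true := by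
  rw [prefixOnes, List.take_of_length_le h]

lemma prefixOnes_succ (i : ℕ) :
    prefixOnes S (i + 1) = prefixOnes S i + if S.getD i false then 1 else 0 := by
  rw [prefixOnes, List.take_add_one, List.count_append, List.getD_eq_getElem?_getD]
  rcases S[i]? with _ | _ | _ <;> rfl

end Prefix

section Wsub

variable (S : List Bool)

lemma wsub_cons (b : Bool) :
    wsub (b :: S) = (if b then [false, true] else [false, false, true]) ++ wsub S :=
  List.flatMap_cons

lemma count_wsub : (wsub S).count true = S.length := by
  induction S with
  | nil => rfl
  | cons b S ih => cases b <;> simp [wsub_cons, ih]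

lemma length_wsub_add_count : (wsub S).length + S.count true = 3 * S.length := by
  induction S with
  | nil => rfl
  | cons b S ih => cases b <;> simp [wsub_cons] <;> omega

end Wsub

section BlockEnd

variable (S : List Bool)

def blockEnd (k : ℕ) : ℕ := (wsub (S.take k)).length

lemma blockEnd_add_prefixOnes {k : ℕ} (hk : k ≤ S.length) :
    blockEnd S k + prefixOnes S k = 3 * k := by
  have := length_wsub_add_count (S.take k)
  rwa [List.length_take_of_le hk] at this

lemma blockEnd_add_two_mul_le {k d : ℕ} (h : k + d ≤ S.length) :
    blockEnd S k + 2 * d ≤ blockEnd S (k + d) := by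
  have := blockEnd_add_prefixOnes S (k := k) (by omega)
  have := blockEnd_add_prefixOnes S h
  have := prefixOnes_add_le S k d
  omega

theorem le_prefixOnes_wsub_iff {S : List Bool} {k : ℕ} (hk : k ≤ S.length) (p : ℕ) :
    k ≤ prefixOnes (wsub S) p ↔ blockEnd S k ≤ p := by
  induction S generalizing k p with
  | nil => simp_all [blockEnd, wsub]
  | cons b S ih =>
    rcases k with _ | k
    · simp [blockEnd, wsub]
    have ihk := @ih k (by simpa using hk)
    simp only [prefixOnes, blockEnd, List.take_succ_cons, wsub_cons, List.take_append,
      List.count_append, List.length_append] at ihk ⊢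
    cases b
    · rcases p with _ | _ | _ | p <;> simp [Nat.lt_one_add_iff, ihk] <;> omega
    · rcases p with _ | _ | p <;> simp [Nat.lt_one_add_iff, ihk] <;> omega

end BlockEnd

section Discrepancy

variable {S T : List Bool}

def discrepancy (S T : List Bool) (i : ℕ) : ℤ := prefixOnes S i - prefixOnes T i

lemma discrepancy_swap (i : ℕ) : discrepancy T S i = -discrepancy S T i := by
  simp [discrepancy]

lemma blockEnd_sub_blockEnd (hlen : S.length = T.length) {k : ℕ} (hk : k ≤ S.length) :
    (blockEnd T k : ℤ) - blockEnd S k = discrepancy S T k := by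
  have := blockEnd_add_prefixOnes S hk
  have := blockEnd_add_prefixOnes T (hlen ▸ hk)
  simp only [discrepancy]
  omega

lemma prefixOnes_wsub_le_length (p : ℕ) : prefixOnes (wsub S) p ≤ S.length :=
  count_wsub S ▸ prefixOnes_le_count _ p

/-- With `a` ones of `w(T)` and `a + D` ones of `w(S)` up to `p`, take `k = a + 1`: the `k`-th one
of `w(T)` lies beyond `p`, while the `(a + D)`-th one of `w(S)`, at least `2 (D - 1)` positions
after its `k`-th, does not. -/
lemma exists_blockEnd_of_discrepancy_wsub_pos (hlen : S.length = T.length) {p : ℕ}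
    (h : 0 < discrepancy (wsub S) (wsub T) p) :
    ∃ k ≤ S.length, (blockEnd S k : ℤ) + 2 * (discrepancy (wsub S) (wsub T) p - 1) ≤ p ∧
      p < blockEnd T k := by
  set a := prefixOnes (wsub T) p
  set b := prefixOnes (wsub S) p
  have hab : a < b := by simp only [discrepancy] at h; omega
  have hb : b ≤ S.length := prefixOnes_wsub_le_length p
  have hSb : blockEnd S b ≤ p := (le_prefixOnes_wsub_iff hb p).mp le_rfl
  have hTa : p < blockEnd T (a + 1) := lt_of_not_ge fun hT =>
    absurd ((le_prefixOnes_wsub_iff (by omega) p).mpr hT) (by omega)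
  have hsep := blockEnd_add_two_mul_le S (k := a + 1) (d := b - (a + 1)) (by omega)
  rw [Nat.add_sub_cancel' hab] at hsep
  refine ⟨a + 1, by omega, ?_, hTa⟩
  simp only [discrepancy]
  omega

theorem discrepancy_wsub_le (hlen : S.length = T.length) {A : ℤ}
    (hA : ∀ i, discrepancy S T i ≤ A) (p : ℕ) :
    discrepancy (wsub S) (wsub T) p ≤ max (A - 1) 1 := by
  by_contra! h
  obtain ⟨k, hk, hS, hT⟩ := exists_blockEnd_of_discrepancy_wsub_pos hlen (p := p) (by omega)
  have := blockEnd_sub_blockEnd hlen hk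
  have := hA k
  omega

theorem abs_discrepancy_wsub_le (hlen : S.length = T.length) {A : ℤ}
    (hA : ∀ i, |discrepancy S T i| ≤ A) (p : ℕ) :
    |discrepancy (wsub S) (wsub T) p| ≤ max (A - 1) 1 := by
  have hST := discrepancy_wsub_le hlen (fun i => (le_abs_self _).trans (hA i)) p
  have hTS := discrepancy_wsub_le hlen.symm
    (fun i => (discrepancy_swap i ▸ neg_le_abs _).trans (hA i)) p
  rw [discrepancy_swap] at hTS
  exact abs_le.mpr ⟨by omega, hST⟩

lemma exists_min_blockEnd_eq_of_discrepancy_wsub_ne_zero (hlen : S.length = T.length)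
    (h1 : ∀ i, |discrepancy S T i| ≤ 1) {p : ℕ} (hp : discrepancy (wsub S) (wsub T) p ≠ 0) :
    ∃ k ≤ S.length, min (blockEnd S k) (blockEnd T k) = p := by
  wlog hpos : 0 < discrepancy (wsub S) (wsub T) p generalizing S T
  · have h1' (i : ℕ) : |discrepancy T S i| ≤ 1 := by rw [discrepancy_swap, abs_neg]; exact h1 i
    obtain ⟨k, hk, hkp⟩ := this hlen.symm h1' (by rw [discrepancy_swap]; omega)
      (by rw [discrepancy_swap]; omega)
    exact ⟨k, hlen ▸ hk, min_comm (blockEnd S k) _ ▸ hkp⟩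
  obtain ⟨k, hk, hS, hT⟩ := exists_blockEnd_of_discrepancy_wsub_pos hlen hpos
  have := blockEnd_sub_blockEnd hlen hk
  have := abs_le.mp (h1 k)
  exact ⟨k, hk, by omega⟩

theorem discrepancy_wsub_eq_zero_or (hlen : S.length = T.length)
    (h1 : ∀ i, |discrepancy S T i| ≤ 1) (q : ℕ) :
    discrepancy (wsub S) (wsub T) q = 0 ∨ discrepancy (wsub S) (wsub T) (q + 1) = 0 := by
  by_contra! ⟨hq, hq1⟩
  obtain ⟨k, hk, hkq⟩ := exists_min_blockEnd_eq_of_discrepancy_wsub_ne_zero hlen h1 hq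
  obtain ⟨l, hl, hlq⟩ := exists_min_blockEnd_eq_of_discrepancy_wsub_ne_zero hlen h1 hq1
  have hsep : ∀ i j, i < j → j ≤ S.length →
      min (blockEnd S i) (blockEnd T i) + 2 ≤ min (blockEnd S j) (blockEnd T j) := by
    intro i j hij hj
    have hS := blockEnd_add_two_mul_le S (k := i) (d := j - i) (by omega)
    have hT := blockEnd_add_two_mul_le T (k := i) (d := j - i) (by omega)
    rw [Nat.add_sub_cancel' hij.le] at hS hT
    omega
  rcases lt_trichotomy k l with hkl | rfl | hlk
  · have := hsep k l hkl hl; omega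
  · omega
  · have := hsep l k hlk hk; omega

end Discrepancy

section Defects

variable {U V : List Bool}

lemma discrepancy_zero : discrepancy U V 0 = 0 := by
  simp [discrepancy, prefixOnes_zero]

lemma discrepancy_succ_sub (i : ℕ) :
    discrepancy U V (i + 1) - discrepancy U V i =
      (if U.getD i false then 1 else 0) - (if V.getD i false then 1 else 0) := by
  simp only [discrepancy, prefixOnes_succ]
  split_ifs <;> push_cast <;> ring

lemma getD_ne_iff_discrepancy_succ_ne (i : ℕ) :
    U.getD i false ≠ V.getD i false ↔ discrepancy U V (i + 1) ≠ discrepancy U V i := by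
  have := discrepancy_succ_sub (U := U) (V := V) i
  generalize U.getD i false = u, V.getD i false = v at this ⊢
  cases u <;> cases v <;> simp at this ⊢ <;> omega

lemma BalancedBits.discrepancy_of_length_le (hbal : BalancedBits U V) {i : ℕ}
    (hi : U.length ≤ i) : discrepancy U V i = 0 := by
  simp [discrepancy, prefixOnes_of_length_le _ hi, prefixOnes_of_length_le _ (hbal.1 ▸ hi),
    hbal.2]

lemma isDefect_of_discrepancy (hlen : U.length = V.length) {j : ℕ} (hj : j + 2 ≤ U.length)
    (h0 : discrepancy U V j = 0) (h1 : discrepancy U V (j + 1) ≠ 0)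
    (h2 : discrepancy U V (j + 2) = 0) : IsDefect U V (j + 1) := by
  have s0 := discrepancy_succ_sub (U := U) (V := V) j
  have s1 : discrepancy U V (j + 2) - discrepancy U V (j + 1) = _ :=
    discrepancy_succ_sub (j + 1)
  refine ⟨by omega, hj, ⟨by simp [hlen], ?_⟩, ?_⟩
  · simp only [discrepancy, prefixOnes] at h0
    exact_mod_cast sub_eq_zero.mp h0
  · simp only [Nat.add_sub_cancel]
    generalize U.getD j false = u₀, V.getD j false = v₀, U.getD (j + 1) false = u₁,
      V.getD (j + 1) false = v₁ at s0 s1 ⊢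
    cases u₀ <;> cases v₀ <;> cases u₁ <;> cases v₁ <;> simp at s0 s1 ⊢ <;> omega

theorem differByDefects_of_discrepancy (hbal : BalancedBits U V)
    (hiso : ∀ q, discrepancy U V q = 0 ∨ discrepancy U V (q + 1) = 0) :
    DifferByDefects U V := by
  refine ⟨hbal, fun i hi1 hil hne => ?_⟩
  obtain ⟨j, rfl⟩ : ∃ j, i = j + 1 := ⟨i - 1, by omega⟩
  rw [Nat.add_sub_cancel, getD_ne_iff_discrepancy_succ_ne] at hne
  have hend (q : ℕ) (hq : U.length ≤ q) : discrepancy U V q = 0 :=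
    hbal.discrepancy_of_length_le hq
  rcases hiso j with h0 | h1
  · have h1 : discrepancy U V (j + 1) ≠ 0 := by rwa [h0] at hne
    have hj : j + 2 ≤ U.length := by by_contra; exact h1 (hend _ (by omega))
    exact .inr (isDefect_of_discrepancy hbal.1 hj h0 h1 ((hiso (j + 1)).resolve_left h1))
  · obtain ⟨k, rfl⟩ : ∃ k, j = k + 1 := by
      rcases j with _ | k
      · exact absurd (h1.trans discrepancy_zero.symm) hne
      · exact ⟨k, rfl⟩
    have h0 : discrepancy U V (k + 1) ≠ 0 := by rw [h1] at hne; exact hne.symm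
    exact .inl (isDefect_of_discrepancy hbal.1 (by omega) ((hiso k).resolve_right h0) h0 h1)

end Defects

section Iterate

variable {S T : List Bool}

lemma BalancedBits.map_wsub (h : BalancedBits S T) : BalancedBits (wsub S) (wsub T) := by
  have := length_wsub_add_count S
  have := length_wsub_add_count T
  refine ⟨?_, by rw [count_wsub, count_wsub, h.1]⟩
  rw [h.1, h.2] at *
  omega

lemma BalancedBits.iterate_wsub (h : BalancedBits S T) (k : ℕ) :
    BalancedBits (wsub^[k] S) (wsub^[k] T) := by
  induction k with
  | zero => exact h
  | succ k ih =>
    rw [Function.iterate_succ_apply', Function.iterate_succ_apply']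
    exact ih.map_wsub

lemma abs_discrepancy_le_length (hlen : S.length = T.length) (i : ℕ) :
    |discrepancy S T i| ≤ S.length := by
  have hS := (prefixOnes_le_count S i).trans (List.count_le_length (a := true))
  have hT := (prefixOnes_le_count T i).trans (List.count_le_length (a := true))
  rw [discrepancy, abs_le]
  omega

theorem abs_discrepancy_iterate_wsub_le (h : BalancedBits S T) (k i : ℕ) :
    |discrepancy (wsub^[k] S) (wsub^[k] T) i| ≤ max ((S.length : ℤ) - k) 1 := by
  induction k generalizing i with
  | zero => exact (abs_discrepancy_le_length h.1 i).trans (by simp)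
  | succ k ih =>
    rw [Function.iterate_succ_apply', Function.iterate_succ_apply']
    refine (abs_discrepancy_wsub_le (h.iterate_wsub k).1 ih i).trans ?_
    push_cast
    omega

end Iterate

/-- For balanced bitstrings `S` and `T` and `n = |S| + 1`, the strings
`w^n(S)` and `w^n(T)` differ by defects. -/
theorem wsub_iterate_differ_by_defects (S T : List Bool) (hbal : BalancedBits S T) :
    DifferByDefects (wsub^[S.length + 1] S) (wsub^[S.length + 1] T) := by
  have hbal' := hbal.iterate_wsub S.length
  have h1 : ∀ i, |discrepancy (wsub^[S.length] S) (wsub^[S.length] T) i| ≤ 1 := fun i => by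
    simpa using abs_discrepancy_iterate_wsub_le hbal S.length i
  rw [Function.iterate_succ_apply', Function.iterate_succ_apply']
  exact differByDefects_of_discrepancy hbal'.map_wsub (discrepancy_wsub_eq_zero_or hbal'.1 h1)
end

section
/- The set B of P-positions of the natural (unaltered) Wythoff game equals {(⌊φn⌋, ⌊φ²n⌋) : n ∈ ℕ} ∪ {(⌊φ²n⌋, ⌊φn⌋) : n ∈ ℕ}, where φ = (1+√5)/2. -/
/-- The golden ratio `φ = (1 + √5)/2`. -/
noncomputable def phi : ℝ := (1 + Real.sqrt 5) / 2

/-! Write `aₙ = ⌊φn⌋` and `bₙ = ⌊φ²n⌋`. Since `φ² = φ + 1` we have `bₙ = aₙ + n`, and since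
`1/φ + 1/φ² = 1`, Rayleigh's theorem says that `(aₙ)ₙ≥₁` and `(bₙ)ₙ≥₁` partition the positive
integers. So the pairs `(aₙ, bₙ)`, `(bₙ, aₙ)` meet every row, column and diagonal at most once,
i.e. no move joins two of them; and from any other position `(x, y)` with `x ≤ y` one of them is
reachable: `(bₙ, aₙ)` if `x = bₙ`, and `(aₙ, bₙ)` or `(a_d, b_d)` with `d = y - x` if `x = aₙ`.
P-position sets of a well-founded game are unique, so these pairs are the P-positions. -/

open Real
open scoped symmDiff

def IsPPositionSet {α : Type*} (move : α → α → Prop) (S : Set α) : Prop :=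
  ∀ p, p ∈ S ↔ ∀ q, move p q → q ∉ S

theorem IsPPositionSet.eq {α : Type*} {move : α → α → Prop} (hwf : WellFounded (flip move))
    {S T : Set α} (hS : IsPPositionSet move S) (hT : IsPPositionSet move T) : S = T := by
  ext p
  induction p using hwf.induction with
  | _ p ih =>
    rw [hS, hT]
    exact forall_congr' fun q => imp_congr_right fun hq => not_congr (ih q hq)

theorem wMove_add_lt {p q : ℕ × ℕ} (h : WMove p q) : q.1 + q.2 < p.1 + p.2 := by
  obtain ⟨h₁, h₂⟩ | ⟨h₁, h₂⟩ | ⟨k, hk, hk₁, hk₂, h₁, h₂⟩ := h <;> omega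

theorem wellFounded_flip_wMove : WellFounded (flip WMove) :=
  Subrelation.wf wMove_add_lt (measure fun p : ℕ × ℕ => p.1 + p.2).wf

theorem wMove_swap {p q : ℕ × ℕ} (h : WMove p q) : WMove p.swap q.swap := by
  obtain ⟨h₁, h₂⟩ | ⟨h₁, h₂⟩ | ⟨k, hk, hk₁, hk₂, h₁, h₂⟩ := h
  · exact Or.inr (Or.inl ⟨h₂, h₁⟩)
  · exact Or.inl ⟨h₂, h₁⟩
  · exact Or.inr (Or.inr ⟨k, hk, hk₂, hk₁, h₂, h₁⟩)

theorem phi_eq_goldenRatio : phi = goldenRatio := rfl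

theorem phi_pos : 0 < phi := goldenRatio_pos

theorem holderConjugate_phi_phi_sq : phi.HolderConjugate (phi ^ 2) := by
  rw [holderConjugate_iff, phi_eq_goldenRatio, ← inv_pow, inv_goldenRatio, neg_sq, goldenConj_sq]
  exact ⟨one_lt_goldenRatio, by ring⟩

noncomputable def lowerWythoff (n : ℕ) : ℕ := ⌊phi * n⌋₊

noncomputable def upperWythoff (n : ℕ) : ℕ := ⌊phi ^ 2 * n⌋₊

theorem natCast_lowerWythoff (n : ℕ) : (lowerWythoff n : ℤ) = ⌊phi * n⌋ :=
  Int.natCast_floor_eq_floor (by have := phi_pos; positivity)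

theorem natCast_upperWythoff (n : ℕ) : (upperWythoff n : ℤ) = ⌊phi ^ 2 * n⌋ :=
  Int.natCast_floor_eq_floor (by have := phi_pos; positivity)

theorem upperWythoff_eq (n : ℕ) : upperWythoff n = lowerWythoff n + n := by
  have hφ : 0 ≤ phi * n := by have := phi_pos; positivity
  rw [upperWythoff, lowerWythoff, phi_eq_goldenRatio, goldenRatio_sq, add_mul, one_mul,
    ← phi_eq_goldenRatio, Nat.floor_add_natCast hφ]

theorem lowerWythoff_strictMono : StrictMono lowerWythoff := by
  refine strictMono_nat_of_lt_succ fun n => ?_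
  have hφ : 0 ≤ phi * n := by have := phi_pos; positivity
  have hstep : phi * n + 1 ≤ phi * (n + 1 : ℕ) := by
    rw [Nat.cast_succ, mul_add_one, phi_eq_goldenRatio]
    linarith [one_lt_goldenRatio]
  calc lowerWythoff n < ⌊phi * n⌋₊ + 1 := Nat.lt_succ_self _
    _ = ⌊phi * n + 1⌋₊ := (Nat.floor_add_one hφ).symm
    _ ≤ lowerWythoff (n + 1) := Nat.floor_le_floor hstep

@[simp]
theorem lowerWythoff_zero : lowerWythoff 0 = 0 := by simp [lowerWythoff]

theorem mem_beattySeq_pos_iff {r : ℝ} (hr : 0 ≤ r) (j : ℤ) :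
    j ∈ {beattySeq r k | k > 0} ↔ ∃ n : ℕ, 0 < n ∧ (⌊r * n⌋₊ : ℤ) = j := by
  have hcast (n : ℕ) : beattySeq r n = ⌊r * n⌋₊ := by
    rw [beattySeq, Int.cast_natCast, mul_comm, Int.natCast_floor_eq_floor (by positivity)]
  constructor
  · rintro ⟨k, hk, rfl⟩
    lift k to ℕ using hk.le
    exact ⟨k, by exact_mod_cast hk, (hcast k).symm⟩
  · rintro ⟨n, hn, rfl⟩
    exact ⟨n, by exact_mod_cast hn, hcast n⟩

theorem xor_lowerWythoff_upperWythoff {j : ℕ} (hj : 0 < j) :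
    Xor (∃ n, 0 < n ∧ lowerWythoff n = j) (∃ n, 0 < n ∧ upperWythoff n = j) := by
  have hmem : (j : ℤ) ∈ {beattySeq phi k | k > 0} ∆ {beattySeq (phi ^ 2) k | k > 0} := by
    rw [goldenRatio_irrational.beattySeq_symmDiff_beattySeq_pos holderConjugate_phi_phi_sq]
    exact Int.natCast_pos.mpr hj
  simp only [Set.mem_symmDiff, mem_beattySeq_pos_iff phi_pos.le,
    mem_beattySeq_pos_iff (pow_nonneg phi_pos.le 2),
    Nat.cast_inj] at hmem
  exact hmem

theorem exists_lowerWythoff_or_upperWythoff (j : ℕ) :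
    (∃ n, lowerWythoff n = j) ∨ ∃ n, upperWythoff n = j := by
  rcases Nat.eq_zero_or_pos j with rfl | hj
  · exact Or.inl ⟨0, lowerWythoff_zero⟩
  · obtain ⟨n, -, hn⟩ | ⟨n, -, hn⟩ := (xor_lowerWythoff_upperWythoff hj).or
    exacts [Or.inl ⟨n, hn⟩, Or.inr ⟨n, hn⟩]

theorem lowerWythoff_eq_upperWythoff_iff {n m : ℕ} :
    lowerWythoff n = upperWythoff m ↔ n = 0 ∧ m = 0 := by
  refine ⟨fun h => ?_, fun ⟨hn, hm⟩ => by simp [hn, hm, upperWythoff_eq]⟩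
  have hm := upperWythoff_eq m
  rcases Nat.eq_zero_or_pos n with rfl | hn
  · rw [lowerWythoff_zero] at h
    omega
  have hpos : 0 < lowerWythoff n := by simpa using lowerWythoff_strictMono hn
  rcases Nat.eq_zero_or_pos m with rfl | hm
  · simp only [lowerWythoff_zero] at hm
    omega
  exact absurd ⟨⟨n, hn, rfl⟩, ⟨m, hm, h.symm⟩⟩
    ((xor_iff_or_and_not_and _ _).mp (xor_lowerWythoff_upperWythoff hpos)).2

def wythoffPairs : Set (ℕ × ℕ) :=
  {p | ∃ n, p = (lowerWythoff n, upperWythoff n) ∨ p = (upperWythoff n, lowerWythoff n)}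

theorem not_wMove_of_mem_wythoffPairs {p q : ℕ × ℕ} (hp : p ∈ wythoffPairs)
    (hq : q ∈ wythoffPairs) : ¬ WMove p q := by
  obtain ⟨n, rfl | rfl⟩ := hp <;> obtain ⟨m, rfl | rfl⟩ := hq <;>
  · have hlt := lowerWythoff_strictMono.lt_iff_lt (a := n) (b := m)
    have hgt := lowerWythoff_strictMono.lt_iff_lt (a := m) (b := n)
    have hnm := lowerWythoff_eq_upperWythoff_iff (n := n) (m := m)
    have hmn := lowerWythoff_eq_upperWythoff_iff (n := m) (m := n)
    have hn := upperWythoff_eq n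
    have hm := upperWythoff_eq m
    simp only [WMove]
    omega

theorem swap_mem_wythoffPairs {p : ℕ × ℕ} (hp : p ∈ wythoffPairs) : p.swap ∈ wythoffPairs := by
  obtain ⟨n, rfl | rfl⟩ := hp
  exacts [⟨n, Or.inr rfl⟩, ⟨n, Or.inl rfl⟩]

theorem exists_wMove_mem_wythoffPairs_of_le {x y : ℕ} (hxy : x ≤ y) (h : (x, y) ∉ wythoffPairs) :
    ∃ q ∈ wythoffPairs, WMove (x, y) q := by
  obtain ⟨n, rfl⟩ | ⟨n, rfl⟩ := exists_lowerWythoff_or_upperWythoff x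
  · have hn := upperWythoff_eq n
    rcases lt_trichotomy y (upperWythoff n) with hy | rfl | hy
    · set d := y - lowerWythoff n
      have hd : lowerWythoff d < lowerWythoff n := lowerWythoff_strictMono (by omega)
      have := upperWythoff_eq d
      refine ⟨_, ⟨d, Or.inl rfl⟩, Or.inr (Or.inr ⟨lowerWythoff n - lowerWythoff d, ?_⟩)⟩
      simp only
      omega
    · exact absurd ⟨n, Or.inl rfl⟩ h
    · exact ⟨_, ⟨n, Or.inl rfl⟩, Or.inr (Or.inl ⟨rfl, hy⟩)⟩
  · refine ⟨_, ⟨n, Or.inr rfl⟩, Or.inr (Or.inl ⟨rfl, ?_⟩)⟩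
    by_contra! hy
    have : y = lowerWythoff n := by have := upperWythoff_eq n; simp only at hy; omega
    exact h ⟨n, Or.inr (this ▸ rfl)⟩

theorem exists_wMove_mem_wythoffPairs {p : ℕ × ℕ} (h : p ∉ wythoffPairs) :
    ∃ q ∈ wythoffPairs, WMove p q := by
  rcases le_total p.1 p.2 with hp | hp
  · exact exists_wMove_mem_wythoffPairs_of_le hp h
  · obtain ⟨q, hq, hmove⟩ := exists_wMove_mem_wythoffPairs_of_le hp
      fun hp' => h (swap_mem_wythoffPairs hp')
    exact ⟨q.swap, swap_mem_wythoffPairs hq, wMove_swap hmove⟩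

theorem isPPositionSet_wythoffPairs : IsPPositionSet WMove wythoffPairs := fun p =>
  ⟨fun hp q hmove hq => not_wMove_of_mem_wythoffPairs hp hq hmove, fun h => by
    by_contra hp
    obtain ⟨q, hq, hmove⟩ := exists_wMove_mem_wythoffPairs hp
    exact h q hmove hq⟩

theorem mem_wythoffPairs_iff (x y : ℕ) : (x, y) ∈ wythoffPairs ↔ ∃ n : ℕ,
      ((x : ℤ) = ⌊phi * n⌋ ∧ (y : ℤ) = ⌊phi ^ 2 * n⌋) ∨
      ((x : ℤ) = ⌊phi ^ 2 * n⌋ ∧ (y : ℤ) = ⌊phi * n⌋) := by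
  simp only [wythoffPairs, Set.mem_ofPred_eq, Prod.mk.injEq, ← natCast_lowerWythoff,
    ← natCast_upperWythoff, Nat.cast_inj]

/-- The P-positions of natural Wythoff are exactly the pairs
`{(⌊φn⌋, ⌊φ²n⌋) : n ∈ ℕ} ∪ {(⌊φ²n⌋, ⌊φn⌋) : n ∈ ℕ}`. -/
theorem wythoff_P_positions (B : Set (ℕ × ℕ))
    (hB : ∀ p : ℕ × ℕ, p ∈ B ↔ ∀ q, WMove p q → q ∉ B) :
    ∀ x y : ℕ, (x, y) ∈ B ↔ ∃ n : ℕ,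
      ((x : ℤ) = ⌊phi * n⌋ ∧ (y : ℤ) = ⌊phi ^ 2 * n⌋) ∨
      ((x : ℤ) = ⌊phi ^ 2 * n⌋ ∧ (y : ℤ) = ⌊phi * n⌋) := by
  rw [IsPPositionSet.eq wellFounded_flip_wMove hB isPPositionSet_wythoffPairs]
  exact mem_wythoffPairs_iff
end
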